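/- arXiv:2410.02409 — 8 statements merged into one kernel-verified Lean document; each statement's English description precedes it below -/
import Mathlib

section
/- Let t₃ : ℕ → ℕ be the ternary Thue–Morse word, defined by t₃(n) = (sum of the base-3 digits of n) mod 3 (equivalently, the fixed point starting with 0 of the morphism 0→012, 1→120, 2→201). Then its additive complexity is the periodic word 1 3 5 5 5 ⋯, i.e., ρ⁺_{t₃}(0) = 1, ρ⁺_{t₃}(1) = 3, and ρ⁺_{t₃}(n) = 5 for all n ≥ 2. -/
/-- Sum of the letters of the length-`n` factor of `x` starting at position `i`. -/
def blockSum (x : ℕ → ℕ) (i n : ℕ) : ℕ := ∑ j ∈ Finset.range n, x (i + j)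

/-- Additive complexity: the number of distinct letter-sums of length-`n` factors. -/
noncomputable def addComplexity (x : ℕ → ℕ) (n : ℕ) : ℕ :=
  Set.ncard {s : ℕ | ∃ i : ℕ, blockSum x i n = s}

/-- Parikh vector of the length-`n` factor of `x` starting at position `i`. -/
def parikh (x : ℕ → ℕ) (i n : ℕ) : ℕ → ℕ :=
  fun a => ((Finset.range n).filter fun j => x (i + j) = a).card

/-- Abelian complexity: the number of distinct Parikh vectors of length-`n` factors. -/
noncomputable def abComplexity (x : ℕ → ℕ) (n : ℕ) : ℕ :=
  Set.ncard {P : ℕ → ℕ | ∃ i : ℕ, parikh x i n = P}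

/-- `x` is the fixed point of the morphism `f` starting with the letter `a₀`:
`x 0 = a₀` and `x` is the infinite concatenation `f (x 0) f (x 1) f (x 2) ⋯`. -/
def IsFixedPointOf (f : ℕ → List ℕ) (a₀ : ℕ) (x : ℕ → ℕ) : Prop :=
  x 0 = a₀ ∧ ∀ n j, j < (f (x n)).length →
    x ((∑ k ∈ Finset.range n, (f (x k)).length) + j) = (f (x n)).getD j 0

/-- The ternary Thue–Morse word: the base-3 digit sum, reduced mod 3. -/
def t3 (n : ℕ) : ℕ := (Nat.digits 3 n).sum % 3

/-!
Let `P i = t3 0 + ⋯ + t3 (i - 1)`. Every aligned block `t3 (3m) t3 (3m+1) t3 (3m+2)` is a rotation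
of `012`, so `P (3m) = 3m` and the discrepancy `P i - i` lies in `[-1, 1]`; a factor of length `n`
starting at `i` has sum `n + (P (i + n) - (i + n)) - (P i - i) ∈ [n - 2, n + 2]`. At positions
`≢ 0 [MOD 3]` the discrepancy is determined by the letter `t3 (i / 3)` and takes every value in
`[-1, 1]`; since any two letters occur in `t3` at any prescribed distance `l ≥ 1`, every
difference in `[-2, 2]` is attained once `n ≥ 2`.
-/

namespace Nat

variable {b : ℕ}

theorem sum_digits_of_lt {x : ℕ} (hx : x < b) : (digits b x).sum = x := by
  rcases eq_or_ne x 0 with rfl | hx0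
  · simp
  · simp [digits_of_lt b x hx0 hx]

theorem sum_digits_add_base_pow_mul (hb : 1 < b) {t x : ℕ} (hx : x < b ^ t) (y : ℕ) :
    (digits b (x + b ^ t * y)).sum = (digits b x).sum + (digits b y).sum := by
  rcases eq_or_ne y 0 with rfl | hy
  · simp
  have hlen : (digits b x).length ≤ t := (digits_length_le_iff hb x).2 hx
  have h := digits_append_zeroes_append_digits (k := t - (digits b x).length) hb
    (Nat.pos_of_ne_zero hy) (n := x)
  rw [Nat.add_sub_cancel' hlen] at h
  simp [← h]

theorem sum_digits_base_pow (hb : 1 < b) (k : ℕ) : (digits b (b ^ k)).sum = 1 := by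
  simpa [sum_digits_of_lt hb] using
    sum_digits_add_base_pow_mul hb (t := k) (pow_pos (by omega) k) 1

theorem sum_digits_base_pow_sub_one (hb : 1 < b) (k : ℕ) :
    (digits b (b ^ k - 1)).sum = (b - 1) * k := by
  induction k with
  | zero => simp
  | succ k ih =>
    have hpos : 0 < b ^ k := pow_pos (by omega) k
    have hsplit : b ^ (k + 1) - 1 = (b - 1) + b ^ 1 * (b ^ k - 1) := by
      have : 1 ≤ b ^ (k + 1) := Nat.one_le_pow _ _ (by omega)
      zify [hb.le, hpos, this]
      ring
    rw [hsplit, sum_digits_add_base_pow_mul hb (by simpa using Nat.sub_lt (by omega) one_pos),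
      sum_digits_of_lt (Nat.sub_lt (by omega) one_pos), ih]
    ring

end Nat

theorem t3_lt (n : ℕ) : t3 n < 3 := Nat.mod_lt _ (by norm_num)

theorem t3_of_lt {n : ℕ} (hn : n < 3) : t3 n = n := by
  rw [t3, Nat.sum_digits_of_lt hn, Nat.mod_eq_of_lt hn]

theorem t3_add_three_pow_mul {t x : ℕ} (hx : x < 3 ^ t) (y : ℕ) :
    t3 (x + 3 ^ t * y) = (t3 x + t3 y) % 3 := by
  rw [t3, t3, t3, Nat.sum_digits_add_base_pow_mul (by norm_num) hx, Nat.add_mod]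

theorem t3_three_mul_add (m : ℕ) {j : ℕ} (hj : j < 3) : t3 (3 * m + j) = (t3 m + j) % 3 := by
  have := t3_add_three_pow_mul (t := 1) (by simpa using hj) m
  rwa [pow_one, t3_of_lt hj, add_comm, add_comm j] at this

theorem t3_three_pow (k : ℕ) : t3 (3 ^ k) = 1 := by
  rw [t3, Nat.sum_digits_base_pow (by norm_num)]

theorem t3_three_pow_sub_one (k : ℕ) : t3 (3 ^ k - 1) = 2 * k % 3 := by
  rw [t3, Nat.sum_digits_base_pow_sub_one (by norm_num)]

/-- The witness is `x = 3 ^ (j + k) - l` with `l ≤ 3 ^ j`: `x + l` has digit sum `1`, while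
`x = (3 ^ j - l) + 3 ^ j * (3 ^ k - 1)` has digit sum `t3 (3 ^ j - l) + 2 k`, so `k` tunes the
difference mod 3. -/
theorem exists_t3_add_eq (l : ℕ) (hl : 0 < l) (d : ℕ) : ∃ x, t3 (x + l) = (t3 x + d) % 3 := by
  obtain ⟨j, hj⟩ : ∃ j, l ≤ 3 ^ j := ⟨l, (Nat.lt_pow_self (by norm_num)).le⟩
  set k := t3 (3 ^ j - l) + d + 2
  have hk : 1 ≤ 3 ^ k := Nat.one_le_pow _ _ (by norm_num)
  have hsplit : 3 ^ (j + k) - l = (3 ^ j - l) + 3 ^ j * (3 ^ k - 1) := by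
    rw [pow_add, Nat.mul_sub, mul_one]
    have : 3 ^ j ≤ 3 ^ j * 3 ^ k := Nat.le_mul_of_pos_right _ hk
    omega
  refine ⟨3 ^ (j + k) - l, ?_⟩
  rw [Nat.sub_add_cancel (hj.trans (Nat.pow_le_pow_right (by norm_num) (by omega))),
    t3_three_pow, hsplit, t3_add_three_pow_mul (by omega), t3_three_pow_sub_one]
  omega

theorem exists_t3_eq_and_t3_add_eq (l : ℕ) (hl : 0 < l) {a b : ℕ} (ha : a < 3) (hb : b < 3) :
    ∃ m, t3 m = a ∧ t3 (m + l) = b := by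
  obtain ⟨x, hx⟩ := exists_t3_add_eq l hl (b + 3 - a)
  have hN : x + l < 3 ^ (x + l) := Nat.lt_pow_self (by norm_num)
  have hc : t3 ((a + 3 - t3 x) % 3) = (a + 3 - t3 x) % 3 := t3_of_lt (Nat.mod_lt _ (by norm_num))
  have := t3_lt x
  refine ⟨x + 3 ^ (x + l) * ((a + 3 - t3 x) % 3), ?_, ?_⟩
  · rw [t3_add_three_pow_mul (by omega), hc]
    omega
  · rw [add_right_comm, t3_add_three_pow_mul hN, hx, hc]
    omega

theorem blockSum_zero_add (x : ℕ → ℕ) (i n : ℕ) :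
    blockSum x 0 (i + n) = blockSum x 0 i + blockSum x i n := by
  simp [blockSum, Finset.sum_range_add]

theorem blockSum_t3_three_mul_three (m : ℕ) : blockSum t3 (3 * m) 3 = 3 := by
  have h0 := t3_three_mul_add m (show 0 < 3 by norm_num)
  have h1 := t3_three_mul_add m (show 1 < 3 by norm_num)
  have h2 := t3_three_mul_add m (show 2 < 3 by norm_num)
  have := t3_lt m
  simp only [blockSum, Finset.sum_range_succ, Finset.sum_range_zero]
  omega

theorem blockSum_t3_zero_three_mul (m : ℕ) : blockSum t3 0 (3 * m) = 3 * m := by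
  induction m with
  | zero => rfl
  | succ m ih => rw [mul_add_one, blockSum_zero_add, ih, blockSum_t3_three_mul_three]

def t3Discrepancy (i : ℕ) : ℤ := blockSum t3 0 i - i

theorem blockSum_t3_eq (i n : ℕ) :
    (blockSum t3 i n : ℤ) = n + (t3Discrepancy (i + n) - t3Discrepancy i) := by
  rw [t3Discrepancy, t3Discrepancy, blockSum_zero_add]
  push_cast
  ring

theorem t3Discrepancy_three_mul (m : ℕ) : t3Discrepancy (3 * m) = 0 := by
  simp [t3Discrepancy, blockSum_t3_zero_three_mul]

theorem t3Discrepancy_three_mul_add_one (m : ℕ) : t3Discrepancy (3 * m + 1) = t3 m - 1 := by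
  have h0 := t3_three_mul_add m (show 0 < 3 by norm_num)
  have := t3_lt m
  rw [t3Discrepancy, blockSum_zero_add, blockSum_t3_zero_three_mul]
  simp only [blockSum, Finset.sum_range_one]
  omega

theorem t3Discrepancy_three_mul_add_two (m : ℕ) :
    t3Discrepancy (3 * m + 2) = (t3 m + (t3 m + 1) % 3 : ℕ) - 2 := by
  have h0 := t3_three_mul_add m (show 0 < 3 by norm_num)
  have h1 := t3_three_mul_add m (show 1 < 3 by norm_num)
  have := t3_lt m
  rw [t3Discrepancy, blockSum_zero_add, blockSum_t3_zero_three_mul]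
  simp only [blockSum, Finset.sum_range_succ, Finset.sum_range_zero]
  omega

theorem abs_t3Discrepancy_le_one (i : ℕ) : |t3Discrepancy i| ≤ 1 := by
  have := t3_lt (i / 3)
  rw [abs_le]
  obtain h | h | h : i % 3 = 0 ∨ i % 3 = 1 ∨ i % 3 = 2 := by omega
  · rw [← Nat.div_add_mod i 3, h, add_zero, t3Discrepancy_three_mul]
    norm_num
  · rw [← Nat.div_add_mod i 3, h, t3Discrepancy_three_mul_add_one]
    omega
  · rw [← Nat.div_add_mod i 3, h, t3Discrepancy_three_mul_add_two]
    omega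

theorem exists_t3Discrepancy_three_mul_add_eq {r : ℕ} (hr : r = 1 ∨ r = 2) {u : ℤ}
    (hu : |u| ≤ 1) : ∃ a < 3, ∀ m, t3 m = a → t3Discrepancy (3 * m + r) = u := by
  rw [abs_le] at hu
  rcases hr with rfl | rfl
  · refine ⟨(u + 1).toNat, by omega, fun m hm => ?_⟩
    rw [t3Discrepancy_three_mul_add_one, hm]
    omega
  · obtain ⟨a, ha, hau⟩ : ∃ a < 3, ((a + (a + 1) % 3 : ℕ) : ℤ) - 2 = u := by
      obtain rfl | rfl | rfl : u = -1 ∨ u = 0 ∨ u = 1 := by omega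
      exacts [⟨0, by norm_num, rfl⟩, ⟨2, by norm_num, rfl⟩, ⟨1, by norm_num, rfl⟩]
    exact ⟨a, ha, fun m hm => by rw [t3Discrepancy_three_mul_add_two, hm, hau]⟩

theorem exists_t3Discrepancy_add_sub_eq {n : ℕ} (hn : 2 ≤ n) {d : ℤ} (hd : |d| ≤ 2) :
    ∃ i, t3Discrepancy (i + n) - t3Discrepancy i = d := by
  obtain ⟨q, r, r', hq, hr, hr', hqn⟩ : ∃ q r r', 0 < q ∧ (r = 1 ∨ r = 2) ∧ (r' = 1 ∨ r' = 2) ∧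
      n + r = 3 * q + r' := by
    have := Nat.mod_lt n (show 0 < 3 by norm_num)
    interval_cases h : n % 3
    · exact ⟨n / 3, 1, 1, by omega, by omega, by omega, by omega⟩
    · exact ⟨n / 3, 1, 2, by omega, by omega, by omega, by omega⟩
    · exact ⟨n / 3 + 1, 2, 1, by omega, by omega, by omega, by omega⟩
  rw [abs_le] at hd
  obtain ⟨a, ha, hau⟩ := exists_t3Discrepancy_three_mul_add_eq hr (u := -(d / 2))
    (by rw [abs_le]; omega)
  obtain ⟨b, hb, hbv⟩ := exists_t3Discrepancy_three_mul_add_eq hr' (u := d - d / 2)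
    (by rw [abs_le]; omega)
  obtain ⟨m, hma, hmb⟩ := exists_t3_eq_and_t3_add_eq q hq ha hb
  refine ⟨3 * m + r, ?_⟩
  rw [show 3 * m + r + n = 3 * (m + q) + r' by omega, hbv _ hmb, hau _ hma]
  ring

theorem setOf_blockSum_t3_eq_Icc {n : ℕ} (hn : 2 ≤ n) :
    {s | ∃ i, blockSum t3 i n = s} = Set.Icc (n - 2) (n + 2) := by
  ext s
  simp only [Set.mem_ofPred_eq, Set.mem_Icc]
  constructor
  · rintro ⟨i, rfl⟩
    have h := blockSum_t3_eq i n
    have h₁ := abs_le.1 (abs_t3Discrepancy_le_one i)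
    have h₂ := abs_le.1 (abs_t3Discrepancy_le_one (i + n))
    omega
  · rintro ⟨h₁, h₂⟩
    obtain ⟨i, hi⟩ := exists_t3Discrepancy_add_sub_eq hn (d := s - n) (by rw [abs_le]; omega)
    have h := blockSum_t3_eq i n
    exact ⟨i, by omega⟩

theorem setOf_blockSum_t3_one : {s | ∃ i, blockSum t3 i 1 = s} = Set.Iio 3 := by
  ext s
  simp only [blockSum, Finset.sum_range_one, add_zero, Set.mem_ofPred_eq, Set.mem_Iio]
  exact ⟨fun ⟨i, hi⟩ => hi ▸ t3_lt i, fun hs => ⟨s, t3_of_lt hs⟩⟩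

/-- The additive complexity of the ternary Thue–Morse word is 1 3 5 5 5 ⋯. -/
theorem ternary_thue_morse_additive_complexity :
    addComplexity t3 0 = 1 ∧ addComplexity t3 1 = 3 ∧
    ∀ n, 2 ≤ n → addComplexity t3 n = 5 := by
  refine ⟨?_, ?_, fun n hn => ?_⟩
  · have h : {s | ∃ i, blockSum t3 i 0 = s} = {0} := by
      ext
      simp [blockSum, eq_comm]
    rw [addComplexity, h, Set.ncard_singleton]
  · rw [addComplexity, setOf_blockSum_t3_one, Set.ncard_Iio_nat]
  · rw [addComplexity, setOf_blockSum_t3_eq_Icc hn, Set.ncard_Icc_nat]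
    omega
end

section
/- Let vtm : ℕ → ℕ be the variant of the Thue–Morse word, i.e., the fixed point starting with 0 of the morphism 0→012, 1→02, 2→1. Then its additive complexity satisfies ρ⁺_{vtm}(0) = 1 and ρ⁺_{vtm}(n) = 3 for all n ≥ 1. -/
/-- The morphism 0→012, 1→02, 2→1 of the variant of the Thue–Morse word. -/
def vtmMorphism : ℕ → List ℕ :=
  fun a => if a = 0 then [0, 1, 2] else if a = 1 then [0, 2] else [1]

/-! ### The Thue–Morse sequence and the explicit form of the fixed point -/

/-- Thue–Morse sequence: parity of the binary digit sum. -/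
def tm (n : ℕ) : ℕ := (Nat.digits 2 n).sum % 2

lemma tm_lt (n : ℕ) : tm n < 2 := Nat.mod_lt _ (by norm_num)

lemma tm_zero : tm 0 = 0 := by simp [tm]

lemma tm_two_mul (n : ℕ) : tm (2 * n) = tm n := by
  rcases Nat.eq_zero_or_pos n with h | h
  · simp [h]
  · unfold tm
    rw [Nat.digits_def' (by norm_num : 1 < 2) (by omega)]
    simp [Nat.mul_div_cancel_left _ (by norm_num : 0 < 2), Nat.mul_mod_right]

lemma tm_two_mul_add_one (n : ℕ) : tm (2 * n + 1) = 1 - tm n := by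
  unfold tm
  rw [Nat.digits_def' (by norm_num : 1 < 2) (by omega)]
  have h1 : (2 * n + 1) % 2 = 1 := by omega
  have h2 : (2 * n + 1) / 2 = n := by omega
  rw [h1, h2]
  have := Nat.mod_lt ((Nat.digits 2 n).sum) (show 0 < 2 by norm_num)
  simp [List.sum_cons, Nat.add_mod]
  omega

lemma tm_one : tm 1 = 1 := by norm_num [tm]
lemma tm_two : tm 2 = 1 := by norm_num [tm]
lemma tm_three : tm 3 = 0 := by norm_num [tm]
lemma tm_five : tm 5 = 0 := by norm_num [tm]
lemma tm_six : tm 6 = 0 := by norm_num [tm]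
lemma tm_seven : tm 7 = 1 := by norm_num [tm]

/-- The variant Thue–Morse word, explicitly. -/
def vtmWord (n : ℕ) : ℕ := 1 + tm n - tm (n + 1)

lemma vtmWord_def (n : ℕ) : vtmWord n = 1 + tm n - tm (n + 1) := rfl

lemma vtm_len (n : ℕ) : (vtmMorphism (vtmWord n)).length + vtmWord n = 3 := by
  have h0 := tm_lt n; have h1 := tm_lt (n + 1)
  have h : vtmWord n = 0 ∨ vtmWord n = 1 ∨ vtmWord n = 2 := by
    rw [vtmWord_def]; omega
  rcases h with h | h | h <;> simp [vtmMorphism, h]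

lemma vtm_sum_len (n : ℕ) :
    (∑ k ∈ Finset.range n, (vtmMorphism (vtmWord k)).length) = 2 * n + tm n := by
  induction n with
  | zero => simp [tm_zero]
  | succ n ih =>
    rw [Finset.sum_range_succ, ih]
    have h0 := tm_lt n; have h1 := tm_lt (n + 1)
    have h2 := vtm_len n
    have h3 := vtmWord_def n
    omega

lemma fp_w : IsFixedPointOf vtmMorphism 0 vtmWord := by
  constructor
  · rw [vtmWord_def, tm_zero, tm_one]
  · intro n j hj
    rw [vtm_sum_len]
    have e0 : tm (2 * n) = tm n := tm_two_mul n
    have e1 : tm (2 * n + 1) = 1 - tm n := tm_two_mul_add_one n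
    have e2 : tm (2 * n + 2) = tm (n + 1) := by
      have := tm_two_mul (n + 1); rw [show 2 * (n + 1) = 2 * n + 2 by ring] at this
      exact this
    have e3 : tm (2 * n + 3) = 1 - tm (n + 1) := by
      have := tm_two_mul_add_one (n + 1)
      rw [show 2 * (n + 1) + 1 = 2 * n + 3 by ring] at this
      exact this
    have h0 : tm n = 0 ∨ tm n = 1 := by have := tm_lt n; omega
    have h1 : tm (n + 1) = 0 ∨ tm (n + 1) = 1 := by have := tm_lt (n + 1); omega
    have g00 : (vtmMorphism 0).getD 0 0 = 0 := by norm_num [vtmMorphism, List.getD]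
    have g01 : (vtmMorphism 0).getD 1 0 = 1 := by norm_num [vtmMorphism, List.getD]
    have g02 : (vtmMorphism 0).getD 2 0 = 2 := by norm_num [vtmMorphism, List.getD]
    have g10 : (vtmMorphism 1).getD 0 0 = 0 := by norm_num [vtmMorphism, List.getD]
    have g11 : (vtmMorphism 1).getD 1 0 = 2 := by norm_num [vtmMorphism, List.getD]
    have g20 : (vtmMorphism 2).getD 0 0 = 1 := by norm_num [vtmMorphism, List.getD]
    rcases h0 with h0 | h0 <;> rcases h1 with h1 | h1
    · -- (0,0): letter 1, block [0,2], start 2n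
      have hwn : vtmWord n = 1 := by rw [vtmWord_def, h0, h1]
      rw [hwn] at hj ⊢
      have hj' : j < 2 := by simpa [vtmMorphism] using hj
      interval_cases j
      · rw [show 2 * n + tm n + 0 = 2 * n by omega, vtmWord_def, g10]; omega
      · rw [show 2 * n + tm n + 1 = 2 * n + 1 by omega, vtmWord_def,
          show 2 * n + 1 + 1 = 2 * n + 2 by ring, g11]; omega
    · -- (0,1): letter 0, block [0,1,2], start 2n
      have hwn : vtmWord n = 0 := by rw [vtmWord_def, h0, h1]
      rw [hwn] at hj ⊢
      have hj' : j < 3 := by simpa [vtmMorphism] using hj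
      interval_cases j
      · rw [show 2 * n + tm n + 0 = 2 * n by omega, vtmWord_def, g00]; omega
      · rw [show 2 * n + tm n + 1 = 2 * n + 1 by omega, vtmWord_def,
          show 2 * n + 1 + 1 = 2 * n + 2 by ring, g01]; omega
      · rw [show 2 * n + tm n + 2 = 2 * n + 2 by omega, vtmWord_def,
          show 2 * n + 2 + 1 = 2 * n + 3 by ring, g02]; omega
    · -- (1,0): letter 2, block [1], start 2n+1
      have hwn : vtmWord n = 2 := by rw [vtmWord_def, h0, h1]
      rw [hwn] at hj ⊢
      have hj' : j < 1 := by simpa [vtmMorphism] using hj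
      interval_cases j
      · rw [show 2 * n + tm n + 0 = 2 * n + 1 by omega, vtmWord_def,
          show 2 * n + 1 + 1 = 2 * n + 2 by ring, g20]; omega
    · -- (1,1): letter 1, block [0,2], start 2n+1
      have hwn : vtmWord n = 1 := by rw [vtmWord_def, h0, h1]
      rw [hwn] at hj ⊢
      have hj' : j < 2 := by simpa [vtmMorphism] using hj
      interval_cases j
      · rw [show 2 * n + tm n + 0 = 2 * n + 1 by omega, vtmWord_def,
          show 2 * n + 1 + 1 = 2 * n + 2 by ring, g10]; omega
      · rw [show 2 * n + tm n + 1 = 2 * n + 2 by omega, vtmWord_def,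
          show 2 * n + 2 + 1 = 2 * n + 3 by ring, g11]; omega

/-! ### Uniqueness of the fixed point -/

lemma vtm_len_pos (a : ℕ) : 0 < (vtmMorphism a).length := by
  unfold vtmMorphism; split_ifs <;> simp

section Unique
variable (x : ℕ → ℕ)

/-- Position of the start of the `n`-th block. -/
def Lpos (n : ℕ) : ℕ := ∑ k ∈ Finset.range n, (vtmMorphism (x k)).length

lemma Lpos_succ (n : ℕ) : Lpos x (n + 1) = Lpos x n + (vtmMorphism (x n)).length := by
  simp [Lpos, Finset.sum_range_succ]

lemma Lpos_cover (m : ℕ) : ∃ n, Lpos x n ≤ m ∧ m < Lpos x (n + 1) := by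
  induction m with
  | zero =>
    exact ⟨0, le_refl _, by rw [Lpos_succ]; have := vtm_len_pos (x 0); simp [Lpos]; omega⟩
  | succ m ih =>
    obtain ⟨n, h1, h2⟩ := ih
    rcases Nat.lt_or_ge (m + 1) (Lpos x (n + 1)) with h | h
    · exact ⟨n, by omega, h⟩
    · refine ⟨n + 1, h, ?_⟩
      rw [Lpos_succ x (n + 1)]
      have := vtm_len_pos (x (n + 1))
      omega

lemma Lpos_ge (hx : IsFixedPointOf vtmMorphism 0 x) :
    ∀ n, 1 ≤ n → n + 2 ≤ Lpos x n := by
  intro n hn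
  induction n with
  | zero => omega
  | succ n ih =>
    rcases Nat.eq_zero_or_pos n with rfl | hn'
    · rw [Lpos_succ]
      have : (vtmMorphism (x 0)).length = 3 := by rw [hx.1]; rfl
      simp [Lpos, this]
    · have := ih hn'
      rw [Lpos_succ]
      have := vtm_len_pos (x n)
      omega

lemma x_eq_w (hx : IsFixedPointOf vtmMorphism 0 x) : ∀ m, x m = vtmWord m := by
  intro m
  induction m using Nat.strong_induction_on with
  | _ m ih =>
    rcases Nat.eq_zero_or_pos m with rfl | hm
    · rw [hx.1, fp_w.1]
    · obtain ⟨n, h1, h2⟩ := Lpos_cover x m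
      have hnm : n < m := by
        rcases Nat.eq_zero_or_pos n with rfl | hn
        · -- m < Lpos x 1 and m ≥ 1, n = 0 < m
          exact hm
        · have := Lpos_ge x hx n hn; omega
      have hxk : ∀ k, k < n → x k = vtmWord k := fun k hk => ih k (by omega)
      have hLeq : Lpos x n = Lpos vtmWord n := by
        unfold Lpos
        exact Finset.sum_congr rfl fun k hk => by
          rw [hxk k (Finset.mem_range.mp hk)]
      have hxn : x n = vtmWord n := by
        rcases Nat.eq_zero_or_pos n with rfl | hn
        · rw [hx.1, fp_w.1]
        · exact ih n hnm
      set j := m - Lpos x n with hj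
      have hjlen : j < (vtmMorphism (x n)).length := by
        rw [Lpos_succ] at h2; omega
      have hm_eq : m = Lpos x n + j := by omega
      have e1 := hx.2 n j hjlen
      have e2 := fp_w.2 n j (by rw [← hxn]; exact hjlen)
      rw [show (∑ k ∈ Finset.range n, (vtmMorphism (x k)).length) = Lpos x n from rfl]
        at e1
      rw [show (∑ k ∈ Finset.range n, (vtmMorphism (vtmWord k)).length)
            = Lpos vtmWord n from rfl, ← hLeq] at e2
      rw [hm_eq, e1, e2, hxn]

end Unique

/-! ### Block sums of the explicit word -/

lemma blockSum_w (i n : ℕ) : blockSum vtmWord i n + tm (i + n) = n + tm i := by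
  induction n with
  | zero => simp [blockSum]
  | succ n ih =>
    have h1 := tm_lt (i + n + 1)
    have h2 := tm_lt (i + n)
    unfold blockSum at *
    rw [Finset.sum_range_succ]
    have hv : vtmWord (i + n) = 1 + tm (i + n) - tm (i + n + 1) := rfl
    have he : i + (n + 1) = i + n + 1 := by ring
    rw [he]
    omega

/-- Existence of all four Thue–Morse value pairs at every positive distance. -/
lemma tm_pairs : ∀ n, 1 ≤ n →
    (∃ i, tm i = 0 ∧ tm (i + n) = 1) ∧ (∃ i, tm i = 1 ∧ tm (i + n) = 0) ∧
    (∃ i, tm i = 0 ∧ tm (i + n) = 0) ∧ (∃ i, tm i = 1 ∧ tm (i + n) = 1) := by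
  intro n
  induction n using Nat.strong_induction_on with
  | _ n ih =>
    intro hn
    rcases Nat.even_or_odd n with ⟨m, hm⟩ | ⟨m, hm⟩
    · -- n = 2m
      have hm1 : 1 ≤ m := by omega
      obtain ⟨⟨a, ha0, ha1⟩, ⟨b, hb0, hb1⟩, ⟨c, hc0, hc1⟩, ⟨d, hd0, hd1⟩⟩ :=
        ih m (by omega) hm1
      refine ⟨⟨2 * a, ?_, ?_⟩, ⟨2 * b, ?_, ?_⟩, ⟨2 * c, ?_, ?_⟩, ⟨2 * d, ?_, ?_⟩⟩
      · rw [tm_two_mul]; exact ha0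
      · rw [show 2 * a + n = 2 * (a + m) by omega, tm_two_mul]; exact ha1
      · rw [tm_two_mul]; exact hb0
      · rw [show 2 * b + n = 2 * (b + m) by omega, tm_two_mul]; exact hb1
      · rw [tm_two_mul]; exact hc0
      · rw [show 2 * c + n = 2 * (c + m) by omega, tm_two_mul]; exact hc1
      · rw [tm_two_mul]; exact hd0
      · rw [show 2 * d + n = 2 * (d + m) by omega, tm_two_mul]; exact hd1
    · -- n = 2m + 1
      rcases Nat.eq_zero_or_pos m with rfl | hm1
      · -- n = 1
        have h1 : n = 1 := by omega
        subst h1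
        refine ⟨⟨0, tm_zero, tm_one⟩, ⟨2, tm_two, tm_three⟩,
          ⟨5, tm_five, tm_six⟩, ⟨1, tm_one, tm_two⟩⟩
      · obtain ⟨⟨a, ha0, ha1⟩, ⟨b, hb0, hb1⟩, ⟨c, hc0, hc1⟩, ⟨d, hd0, hd1⟩⟩ :=
          ih m (by omega) hm1
        refine ⟨⟨2 * c, ?_, ?_⟩, ⟨2 * d, ?_, ?_⟩, ⟨2 * a, ?_, ?_⟩, ⟨2 * b, ?_, ?_⟩⟩
        · rw [tm_two_mul]; exact hc0
        · rw [show 2 * c + n = 2 * (c + m) + 1 by omega, tm_two_mul_add_one]; omega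
        · rw [tm_two_mul]; exact hd0
        · rw [show 2 * d + n = 2 * (d + m) + 1 by omega, tm_two_mul_add_one]; omega
        · rw [tm_two_mul]; exact ha0
        · rw [show 2 * a + n = 2 * (a + m) + 1 by omega, tm_two_mul_add_one]; omega
        · rw [tm_two_mul]; exact hb0
        · rw [show 2 * b + n = 2 * (b + m) + 1 by omega, tm_two_mul_add_one]; omega

/-- The additive complexity of the variant of the Thue–Morse word is 1 3 3 3 ⋯. -/
theorem vtm_additive_complexity (x : ℕ → ℕ)
    (hx : IsFixedPointOf vtmMorphism 0 x) :
    addComplexity x 0 = 1 ∧ ∀ n, 1 ≤ n → addComplexity x n = 3 := by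
  have hxw : ∀ m, x m = vtmWord m := x_eq_w x hx
  have hbs : ∀ i n, blockSum x i n = blockSum vtmWord i n := by
    intro i n
    unfold blockSum
    exact Finset.sum_congr rfl fun j _ => hxw _
  constructor
  · have hset : {s : ℕ | ∃ i : ℕ, blockSum x i 0 = s} = {0} := by
      ext s
      simp [blockSum, eq_comm]
    rw [addComplexity, hset, Set.ncard_singleton]
  · intro n hn
    have hset : {s : ℕ | ∃ i : ℕ, blockSum x i n = s} = {n - 1, n, n + 1} := by
      ext s
      simp only [Set.mem_setOf_eq, Set.mem_insert_iff, Set.mem_singleton_iff]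
      constructor
      · rintro ⟨i, rfl⟩
        have h := blockSum_w i n
        have h1 := tm_lt i
        have h2 := tm_lt (i + n)
        rw [hbs]
        omega
      · intro hs
        obtain ⟨⟨a, ha0, ha1⟩, ⟨b, hb0, hb1⟩, -, -⟩ := tm_pairs n hn
        rcases hs with h | h | h
        · refine ⟨a, ?_⟩
          rw [hbs]
          have hb2 := blockSum_w a n
          omega
        · refine ⟨n, ?_⟩
          rw [hbs]
          have hb2 := blockSum_w n n
          have h2 : tm (n + n) = tm n := by
            rw [show n + n = 2 * n by ring, tm_two_mul]
          omega
        · refine ⟨b, ?_⟩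
          rw [hbs]
          have hb2 := blockSum_w b n
          omega
    rw [addComplexity, hset]
    exact Set.ncard_eq_three.mpr
      ⟨n - 1, n, n + 1, by omega, by omega, by omega, rfl⟩
end

section
/- Let vtm : ℕ → ℕ be the fixed point starting with 0 of the morphism 0→012, 1→02, 2→1. Then the sum of letters of every length-n factor of vtm lies within 1 of n: for all i and all n, the sum ∑_{j<n} vtm(i+j) belongs to {n−1, n, n+1} (interpreting n−1 as 0 when n = 0, i.e., |∑_{j<n} vtm(i+j) − n| ≤ 1). -/
/-- auxiliary: positions of block starts -/
def vtmL (x : ℕ → ℕ) (n : ℕ) : ℕ := ∑ k ∈ Finset.range n, (vtmMorphism (x k)).length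

/-- auxiliary: partial sums -/
def vtmP (x : ℕ → ℕ) (m : ℕ) : ℕ := ∑ k ∈ Finset.range m, x k

lemma vtm_take_bounds (a j : ℕ) (hj : j ≤ (vtmMorphism a).length) :
    ((vtmMorphism a).take j).sum ≤ j ∧ j ≤ ((vtmMorphism a).take j).sum + 1 := by
  unfold vtmMorphism at *
  split_ifs at * <;> [skip; skip; skip] <;>
  · simp only [List.length] at hj
    interval_cases j <;> simp

lemma vtm_sum_eq_len (a : ℕ) : (vtmMorphism a).sum = (vtmMorphism a).length := by
  unfold vtmMorphism; split_ifs <;> simp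

lemma take_succ_sum (l : List ℕ) (j : ℕ) (hj : j < l.length) :
    (l.take (j+1)).sum = (l.take j).sum + l.getD j 0 := by
  rw [List.sum_take_succ _ _ hj, List.getD_eq_getElem _ _ hj]

lemma vtm_key (x : ℕ → ℕ) (hx : IsFixedPointOf vtmMorphism 0 x) :
    ∀ n, ∀ j ≤ (vtmMorphism (x n)).length,
      vtmP x (vtmL x n + j) = vtmL x n + ((vtmMorphism (x n)).take j).sum := by
  have step : ∀ n, vtmP x (vtmL x n) = vtmL x n →
      ∀ j ≤ (vtmMorphism (x n)).length,
      vtmP x (vtmL x n + j) = vtmL x n + ((vtmMorphism (x n)).take j).sum := by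
    intro n hP j hj
    induction j with
    | zero => simpa using hP
    | succ j ih =>
      have hj' : j < (vtmMorphism (x n)).length := hj
      have := hx.2 n j hj'
      rw [show vtmL x n + (j+1) = (vtmL x n + j) + 1 by ring]
      rw [vtmP, Finset.sum_range_succ, ← vtmP, ih (le_of_lt hj'),
        take_succ_sum _ _ hj']
      have hxval : x (vtmL x n + j) = (vtmMorphism (x n)).getD j 0 := this
      rw [hxval]; ring
  have base : ∀ n, vtmP x (vtmL x n) = vtmL x n := by
    intro n
    induction n with
    | zero => simp [vtmP, vtmL]
    | succ n ih =>
      have h1 := step n ih (vtmMorphism (x n)).length le_rfl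
      have h2 : vtmL x (n+1) = vtmL x n + (vtmMorphism (x n)).length := by
        simp [vtmL, Finset.sum_range_succ]
      rw [h2, h1, List.take_length, vtm_sum_eq_len]
  intro n; exact step n (base n)

lemma vtm_decomp (x : ℕ → ℕ) (m : ℕ) :
    ∃ n j, j < (vtmMorphism (x n)).length ∧ m = vtmL x n + j := by
  induction m with
  | zero => exact ⟨0, 0, vtm_len_pos _, by simp [vtmL]⟩
  | succ m ih =>
    obtain ⟨n, j, hj, hm⟩ := ih
    by_cases h : j + 1 < (vtmMorphism (x n)).length
    · exact ⟨n, j + 1, h, by omega⟩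
    · refine ⟨n + 1, 0, vtm_len_pos _, ?_⟩
      have : vtmL x (n+1) = vtmL x n + (vtmMorphism (x n)).length := by
        simp [vtmL, Finset.sum_range_succ]
      omega

lemma vtm_P_bounds (x : ℕ → ℕ) (hx : IsFixedPointOf vtmMorphism 0 x) (m : ℕ) :
    vtmP x m ≤ m ∧ m ≤ vtmP x m + 1 := by
  obtain ⟨n, j, hj, hm⟩ := vtm_decomp x m
  subst hm
  have hk := vtm_key x hx n j (le_of_lt hj)
  have hb := vtm_take_bounds (x n) j (le_of_lt hj)
  omega

/-- The sum of the letters of every length-n factor of the variant of the Thue–Morse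
word lies within 1 of n. -/
theorem vtm_factor_sums (x : ℕ → ℕ)
    (hx : IsFixedPointOf vtmMorphism 0 x) :
    ∀ i n : ℕ, |(blockSum x i n : ℤ) - (n : ℤ)| ≤ 1 := by
  intro i n
  have hsplit : vtmP x (i + n) = vtmP x i + blockSum x i n := by
    simp [vtmP, blockSum, Finset.sum_range_add]
  have h1 := vtm_P_bounds x hx i
  have h2 := vtm_P_bounds x hx (i + n)
  rw [abs_le]
  constructor <;> [skip; skip] <;> push_cast <;> omega
end

section
/- For all integers k ≥ 1 and C ≥ 1, there exists a strictly increasing sequence of natural numbers a₁ < a₂ < ⋯ < a_k such that for every infinite word w : ℕ → ℕ taking values in {a₁, …, a_k} that is C-balanced, the additive and abelian complexities of w coincide: ρ⁺_w(n) = ρ^{ab}_w(n) for all n ≥ 0. -/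
/-- An infinite word is C-balanced if the numbers of occurrences of any letter in any
two factors of the same length differ by at most C. -/
def CBalanced (x : ℕ → ℕ) (C : ℕ) : Prop :=
  ∀ a i i' n : ℕ, ((parikh x i n a : ℤ) - (parikh x i' n a : ℤ)).natAbs ≤ C

lemma zero_of_bounded_geom (C : ℕ) :
    ∀ m (d : ℕ → ℤ), (∀ t, |d t| ≤ (C : ℤ)) →
      ∑ t ∈ Finset.range m, d t * (C + 1 : ℤ) ^ t = 0 → ∀ t < m, d t = 0 := by
  intro m
  induction m with
  | zero => intro d _ _ t ht; omega
  | succ m ih =>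
    intro d hd hsum t ht
    have hpow : (1 : ℤ) ≤ (C + 1 : ℤ) ^ m := one_le_pow₀ (by omega)
    have hb : |∑ t ∈ Finset.range m, d t * (C + 1 : ℤ) ^ t| ≤ (C + 1 : ℤ) ^ m - 1 := by
      calc |∑ t ∈ Finset.range m, d t * (C + 1 : ℤ) ^ t|
          ≤ ∑ t ∈ Finset.range m, |d t * (C + 1 : ℤ) ^ t| :=
            Finset.abs_sum_le_sum_abs _ _
        _ ≤ ∑ t ∈ Finset.range m, (C : ℤ) * (C + 1 : ℤ) ^ t := by
            apply Finset.sum_le_sum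
            intro u _
            rw [abs_mul, abs_pow, abs_of_nonneg (by positivity : (0:ℤ) ≤ (C+1:ℤ))]
            exact mul_le_mul_of_nonneg_right (hd u) (by positivity)
        _ = (C + 1 : ℤ) ^ m - 1 := by
            rw [← Finset.mul_sum, mul_comm]
            have := geom_sum_mul (C + 1 : ℤ) m
            simpa using this
    rw [Finset.sum_range_succ] at hsum
    have hdm : d m = 0 := by
      have h1 : |d m * (C + 1 : ℤ) ^ m| ≤ (C + 1 : ℤ) ^ m - 1 := by
        have : d m * (C + 1 : ℤ) ^ m = -(∑ t ∈ Finset.range m, d t * (C + 1 : ℤ) ^ t) := by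
          linarith
        rw [this, abs_neg]; exact hb
      rw [abs_mul, abs_pow, abs_of_nonneg (by positivity : (0:ℤ) ≤ (C+1:ℤ))] at h1
      by_contra h0
      have : (1 : ℤ) ≤ |d m| := by
        rcases abs_pos.mpr h0 with h; omega
      nlinarith [abs_nonneg (d m)]
    rcases Nat.lt_succ_iff_lt_or_eq.mp ht with h | h
    · exact ih d hd (by rw [hdm] at hsum; simpa using hsum) t h
    · rw [h]; exact hdm


/-- For all k, C ≥ 1 there is an alphabet a₁ < ⋯ < a_k of naturals such that every
C-balanced word over it has equal additive and abelian complexities. -/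
theorem balanced_valuation_add_eq_ab (k C : ℕ) (hk : 1 ≤ k) (hC : 1 ≤ C) :
    ∃ a : Fin k → ℕ, StrictMono a ∧
      ∀ w : ℕ → ℕ, (∀ i : ℕ, ∃ j : Fin k, w i = a j) → CBalanced w C →
        ∀ n : ℕ, addComplexity w n = abComplexity w n := by
  refine ⟨fun j => (C + 1) ^ (j : ℕ), ?_, ?_⟩
  · intro i j hij
    exact Nat.pow_lt_pow_right (by omega) hij
  · intro w hw hbal n
    set F : (ℕ → ℕ) → ℕ := fun P => ∑ t : Fin k, P ((C + 1) ^ (t : ℕ)) * (C + 1) ^ (t : ℕ)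
      with hF
    -- injectivity of t ↦ (C+1)^t
    have hpowinj : ∀ s t : Fin k, (C + 1) ^ (s : ℕ) = (C + 1) ^ (t : ℕ) → s = t := by
      intro s t h
      have := Nat.pow_right_injective (by omega : 2 ≤ C + 1) h
      exact Fin.ext this
    -- Claim 1 : blockSum = F ∘ parikh
    have claim1 : ∀ i, blockSum w i n = F (parikh w i n) := by
      intro i
      have hmap : ∀ j ∈ Finset.range n, (hw (i + j)).choose ∈ (Finset.univ : Finset (Fin k)) :=
        fun _ _ => Finset.mem_univ _
      have := Finset.sum_fiberwise_of_maps_to hmap (fun j => w (i + j))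
      rw [blockSum, ← this, hF]
      apply Finset.sum_congr rfl
      intro t _
      have hfilter : (Finset.range n).filter (fun j => (hw (i + j)).choose = t)
          = (Finset.range n).filter (fun j => w (i + j) = (C + 1) ^ (t : ℕ)) := by
        apply Finset.filter_congr
        intro j _
        constructor
        · intro h; rw [(hw (i + j)).choose_spec, h]
        · intro h
          exact hpowinj _ _ ((hw (i + j)).choose_spec.symm.trans h)
      rw [hfilter]
      rw [Finset.sum_congr rfl (fun j hj => (Finset.mem_filter.mp hj).2)]
      rw [Finset.sum_const, smul_eq_mul]
      rfl
    -- Claim 2 : F is injective on the parikh set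
    have claim2 : Set.InjOn F {P : ℕ → ℕ | ∃ i : ℕ, parikh w i n = P} := by
      rintro P ⟨i, hi⟩ Q ⟨i', hi'⟩ hFPQ
      subst hi hi'
      set d : ℕ → ℤ := fun t =>
        (parikh w i n ((C + 1) ^ t) : ℤ) - (parikh w i' n ((C + 1) ^ t) : ℤ) with hd
      have hbound : ∀ t, |d t| ≤ (C : ℤ) := by
        intro t
        have h1 := hbal ((C + 1) ^ t) i i' n
        show |(parikh w i n ((C + 1) ^ t) : ℤ) - (parikh w i' n ((C + 1) ^ t) : ℤ)| ≤ (C : ℤ)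
        rw [Int.abs_eq_natAbs]
        exact_mod_cast h1
      have hsum : ∑ t ∈ Finset.range k, d t * (C + 1 : ℤ) ^ t = 0 := by
        have h1 : ((F (parikh w i n) : ℤ)) - (F (parikh w i' n) : ℤ) = 0 := by
          rw [hFPQ]; ring
        rw [hF] at h1
        push_cast at h1
        rw [Fin.sum_univ_eq_sum_range (fun t => (parikh w i n ((C+1)^t) : ℤ) * (C+1:ℤ)^t),
            Fin.sum_univ_eq_sum_range (fun t => (parikh w i' n ((C+1)^t) : ℤ) * (C+1:ℤ)^t)]
          at h1
        rw [← Finset.sum_sub_distrib] at h1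
        rw [← h1]
        apply Finset.sum_congr rfl
        intro t _
        rw [hd]; ring
      have hzero := zero_of_bounded_geom C k d hbound hsum
      funext b
      by_cases hb : ∃ t : Fin k, b = (C + 1) ^ (t : ℕ)
      · obtain ⟨t, rfl⟩ := hb
        have h3 : (parikh w i n ((C + 1) ^ (t : ℕ)) : ℤ)
            - (parikh w i' n ((C + 1) ^ (t : ℕ)) : ℤ) = 0 := hzero (t : ℕ) t.isLt
        omega
      · have hempty : ∀ i₀, parikh w i₀ n b = 0 := by
          intro i₀
          rw [parikh, Finset.card_eq_zero, Finset.filter_eq_empty_iff]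
          intro j _
          obtain ⟨t, ht⟩ := hw (i₀ + j)
          rw [ht]
          intro hcontra
          exact hb ⟨t, hcontra.symm⟩
        rw [hempty i, hempty i']
    -- conclude
    have himg : {s : ℕ | ∃ i : ℕ, blockSum w i n = s}
        = F '' {P : ℕ → ℕ | ∃ i : ℕ, parikh w i n = P} := by
      ext s
      constructor
      · rintro ⟨i, rfl⟩
        exact ⟨parikh w i n, ⟨i, rfl⟩, (claim1 i).symm⟩
      · rintro ⟨P, ⟨i, rfl⟩, rfl⟩
        exact ⟨i, claim1 i⟩
    rw [addComplexity, abComplexity, himg, Set.ncard_image_of_injOn claim2]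
end

section
/- Let f be a Parikh-collinear morphism on a finite alphabet Σ ⊆ ℕ that is prolongable on a letter a (i.e., f(a) begins with a and |f(a)| ≥ 2), and let x be the fixed point of f starting with a. Set k = ∑_{b∈Σ} |f(b)|_b (the total number of occurrences of each letter b in its own image f(b)). Then the additive complexity ρ⁺_x is a k-automatic sequence; in particular, its k-kernel, the set of sequences {n ↦ ρ⁺_x(kᵉ·n + r) : e ≥ 0, 0 ≤ r < kᵉ}, is finite. -/
/-!
Collinearity makes the Parikh vector of every image `f b` the one of `f a` scaled by
`|f b| / |f a|`. Hence the images of letters tile `x` with `L (L n) = k * L n`, and the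
discrepancy `|f a| * (letter sum of a prefix of length i) - (f a).sum * i` vanishes at image
boundaries, so inside an image it depends only on the letter and the offset. The additive
equivalence classes of length-`n` factors therefore correspond to the differences of
discrepancies, which are determined by the finite set of letter pairs whose images start at
distance `n + e`, `|e| ≤ C`. Desubstituting once, a pair at distance `k * n + r + e` comes from
a parent pair at distance `n + ε` with `|ε| ≤ C`, so this window evolves as a finite automaton
reading the base-`k` digits of `n`, and the `k`-kernel is finite.
-/

open Finset

theorem sum_map_eq_sum_count_smul {α β : Type*} [DecidableEq α] [AddCommMonoid β]
    {S : Finset α} {l : List α} (hl : ∀ c ∈ l, c ∈ S) (g : α → β) :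
    (l.map g).sum = ∑ c ∈ S, l.count c • g c := by
  rw [Finset.sum_list_map_count]
  refine sum_subset (fun c hc => hl c (List.mem_toFinset.1 hc)) fun c _ hc => ?_
  rw [List.count_eq_zero_of_not_mem (mt List.mem_toFinset.2 hc), zero_smul]

theorem sum_range_length_getD {α β : Type*} [AddCommMonoid β] (l : List α) (d : α)
    (g : α → β) :
    ∑ t ∈ range l.length, g (l.getD t d) = (l.map g).sum := by
  induction l with
  | nil => simp
  | cons c l ih =>
    rw [List.length_cons, sum_range_succ', List.map_cons, List.sum_cons, ← ih, add_comm]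
    rfl

theorem blockSum_add (x : ℕ → ℕ) (i m n : ℕ) :
    blockSum x i (m + n) = blockSum x i m + blockSum x (i + m) n := by
  simp [blockSum, sum_range_add, add_assoc]

theorem factorsThrough_pow_mul_add {F : Type*} {k : ℕ} (hk : 0 < k) {st : ℕ → F}
    (hstep : ∀ r < k, (fun n => st (k * n + r)).FactorsThrough st) (e : ℕ) :
    ∀ r < k ^ e, (fun n => st (k ^ e * n + r)).FactorsThrough st := by
  induction e with
  | zero =>
    intro r hr n n' h
    simp_all
  | succ e ih =>
    intro r hr n n' h
    have hsplit : ∀ m, k ^ (e + 1) * m + r = k * (k ^ e * m + r / k) + r % k := fun m => by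
      conv_lhs => rw [← Nat.div_add_mod r k]
      ring
    have hq : r / k < k ^ e := Nat.div_lt_of_lt_mul (by rwa [pow_succ'] at hr)
    simp only [hsplit]
    exact hstep _ (Nat.mod_lt _ hk) (ih _ hq h)

/-- A sequence read off a finite-state automaton fed with the base-`k` digits of `n`
has a finite `k`-kernel. -/
theorem finite_kernel_of_factorsThrough {F β : Type*} [Finite F] {k : ℕ} (hk : 0 < k)
    (st : ℕ → F) {ρ : ℕ → β} (hρ : ρ.FactorsThrough st)
    (hstep : ∀ r < k, (fun n => st (k * n + r)).FactorsThrough st) :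
    {g : ℕ → β | ∃ e r : ℕ, r < k ^ e ∧ g = fun n => ρ (k ^ e * n + r)}.Finite := by
  refine ((Set.finite_univ (α := F → F)).image
    fun T n => Function.extend st ρ (fun _ => ρ 0) (T (st n))).subset ?_
  rintro g ⟨e, r, hr, rfl⟩
  refine ⟨Function.extend st (fun n => st (k ^ e * n + r)) id, trivial, funext fun n => ?_⟩
  simp only [(factorsThrough_pow_mul_add hk hstep e r hr).extend_apply, hρ.extend_apply]

theorem finite_kernel_of_le_one {β : Type*} {k : ℕ} (hk : k ≤ 1) (ρ : ℕ → β) :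
    {g : ℕ → β | ∃ e r : ℕ, r < k ^ e ∧ g = fun n => ρ (k ^ e * n + r)}.Finite := by
  refine (Set.finite_singleton ρ).subset ?_
  rintro g ⟨e, r, hr, rfl⟩
  have hke : k ^ e ≤ 1 := pow_le_one₀ (Nat.zero_le k) hk
  have hr0 : r = 0 := by omega
  have hke1 : k ^ e = 1 := by omega
  simp [hr0, hke1]

structure CollinearFixedPoint where
  S : Finset ℕ
  f : ℕ → List ℕ
  a : ℕ
  x : ℕ → ℕ
  closed : ∀ b ∈ S, ∀ c ∈ f b, c ∈ S
  collinear : ∀ b ∈ S, ∀ b' ∈ S, ∃ p q : ℕ, ¬(p = 0 ∧ q = 0) ∧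
    ∀ c ∈ S, p * (f b).count c = q * (f b').count c
  a_mem : a ∈ S
  two_le_length : 2 ≤ (f a).length
  isFixedPoint : IsFixedPointOf f a x
  two_le_k : 2 ≤ ∑ b ∈ S, (f b).count b

namespace CollinearFixedPoint

variable (P : CollinearFixedPoint)

def len (b : ℕ) : ℕ := (P.f b).length

def L (n : ℕ) : ℕ := ∑ j ∈ range n, P.len (P.x j)

def k : ℕ := ∑ b ∈ P.S, (P.f b).count b

theorem len_a_pos : 0 < P.len P.a := by
  have := P.two_le_length
  unfold len
  omega

theorem len_eq_sum_count {b : ℕ} (hb : b ∈ P.S) : P.len b = ∑ c ∈ P.S, (P.f b).count c := by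
  simpa [len, List.map_const', List.sum_replicate] using
    sum_map_eq_sum_count_smul (P.closed b hb) fun _ => (1 : ℕ)

theorem sum_eq_sum_count_mul {b : ℕ} (hb : b ∈ P.S) :
    (P.f b).sum = ∑ c ∈ P.S, (P.f b).count c * c := by
  simpa using sum_map_eq_sum_count_smul (P.closed b hb) id

theorem len_a_mul_count {b c : ℕ} (hb : b ∈ P.S) (hc : c ∈ P.S) :
    P.len P.a * (P.f b).count c = P.len b * (P.f P.a).count c := by
  obtain ⟨p, q, hpq, h⟩ := P.collinear b hb P.a P.a_mem
  have hp : p ≠ 0 := by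
    rintro rfl
    have hq : q ≠ 0 := fun hq => hpq ⟨rfl, hq⟩
    have : P.len P.a = 0 := by
      rw [P.len_eq_sum_count P.a_mem]
      exact sum_eq_zero fun c hc =>
        (Nat.mul_eq_zero.1 (by simpa using (h c hc).symm)).resolve_left hq
    exact P.len_a_pos.ne' this
  have hlen : p * P.len b = q * P.len P.a := by
    rw [P.len_eq_sum_count hb, P.len_eq_sum_count P.a_mem, mul_sum, mul_sum]
    exact sum_congr rfl h
  apply Nat.eq_of_mul_eq_mul_left (Nat.pos_of_ne_zero hp)
  calc p * (P.len P.a * (P.f b).count c) = P.len P.a * (q * (P.f P.a).count c) := by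
        rw [← h c hc]; ring
    _ = p * (P.len b * (P.f P.a).count c) := by rw [← mul_assoc, mul_comm _ q, ← hlen]; ring

theorem len_a_mul_sum {b : ℕ} (hb : b ∈ P.S) :
    P.len P.a * (P.f b).sum = (P.f P.a).sum * P.len b := by
  rw [P.sum_eq_sum_count_mul hb, P.sum_eq_sum_count_mul P.a_mem, mul_sum, sum_mul]
  refine sum_congr rfl fun c hc => ?_
  rw [← mul_assoc, P.len_a_mul_count hb hc]
  ring

theorem sum_count_a_mul_len : ∑ c ∈ P.S, (P.f P.a).count c * P.len c = P.k * P.len P.a := by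
  rw [k, sum_mul]
  refine sum_congr rfl fun c hc => ?_
  rw [mul_comm, ← P.len_a_mul_count hc hc, mul_comm]

theorem sum_map_len {b : ℕ} (hb : b ∈ P.S) : ((P.f b).map P.len).sum = P.k * P.len b := by
  apply Nat.eq_of_mul_eq_mul_left P.len_a_pos
  calc P.len P.a * ((P.f b).map P.len).sum
      = ∑ c ∈ P.S, P.len P.a * (P.f b).count c * P.len c := by
        rw [sum_map_eq_sum_count_smul (P.closed b hb), mul_sum]
        simp only [smul_eq_mul, mul_assoc]
    _ = P.len b * ∑ c ∈ P.S, (P.f P.a).count c * P.len c := by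
        rw [mul_sum]
        exact sum_congr rfl fun c hc => by rw [P.len_a_mul_count hb hc, mul_assoc]
    _ = P.len P.a * (P.k * P.len b) := by rw [sum_count_a_mul_len]; ring

theorem x_zero : P.x 0 = P.a := P.isFixedPoint.1

theorem x_L_add {n j : ℕ} (hj : j < P.len (P.x n)) :
    P.x (P.L n + j) = (P.f (P.x n)).getD j 0 :=
  P.isFixedPoint.2 n j hj

theorem getD_mem {b t : ℕ} (hb : b ∈ P.S) (ht : t < P.len b) : (P.f b).getD t 0 ∈ P.S := by
  rw [List.getD_eq_getElem _ _ ht]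
  exact P.closed b hb _ (List.getElem_mem ht)

theorem L_succ (n : ℕ) : P.L (n + 1) = P.L n + P.len (P.x n) := sum_range_succ _ _

theorem L_mono : Monotone P.L := fun _ _ h => sum_le_sum_of_subset (range_subset_range.2 h)

theorem exists_block_of_lt_L {n i : ℕ} (hi : i < P.L n) :
    ∃ m < n, P.L m ≤ i ∧ i < P.L (m + 1) := by
  induction n with
  | zero => simp [L] at hi
  | succ n ih =>
    by_cases h : i < P.L n
    · obtain ⟨m, hm, hmi⟩ := ih h
      exact ⟨m, by omega, hmi⟩
    · exact ⟨n, by omega, by omega, hi⟩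

/-- The offset, inside `f (f c)`, of the image of the `τ`-th letter of `f c`. -/
def innerStart (c τ : ℕ) : ℕ := ∑ t ∈ range τ, P.len ((P.f c).getD t 0)

theorem innerStart_len {b : ℕ} (hb : b ∈ P.S) : P.innerStart b (P.len b) = P.k * P.len b :=
  (sum_range_length_getD (P.f b) 0 P.len).trans (P.sum_map_len hb)

theorem innerStart_le {c τ : ℕ} (hc : c ∈ P.S) (hτ : τ ≤ P.len c) :
    P.innerStart c τ ≤ P.k * P.len c :=
  P.innerStart_len hc ▸ sum_le_sum_of_subset (range_subset_range.2 hτ)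

theorem L_L_add_eq {μ τ : ℕ} (hτ : τ ≤ P.len (P.x μ)) :
    P.L (P.L μ + τ) = P.L (P.L μ) + P.innerStart (P.x μ) τ := by
  rw [L, sum_range_add, innerStart]
  congr 1
  exact sum_congr rfl fun u hu => by rw [P.x_L_add (lt_of_lt_of_le (mem_range.1 hu) hτ)]

theorem L_L_of_forall_mem {n : ℕ} (hS : ∀ j < n, P.x j ∈ P.S) :
    P.L (P.L n) = P.k * P.L n := by
  induction n with
  | zero => simp [L]
  | succ n ih =>
    rw [P.L_succ n, P.L_L_add_eq le_rfl, ih fun j hj => hS j (by omega),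
      P.innerStart_len (hS n n.lt_succ_self), mul_add]

theorem x_mem_of_lt_L {j : ℕ} (hS : ∀ i < j, P.x i ∈ P.S) (hj : j < P.L j) :
    P.x j ∈ P.S := by
  obtain ⟨m, hm, hmj, hjm⟩ := P.exists_block_of_lt_L hj
  have ht : j - P.L m < P.len (P.x m) := by rw [L_succ] at hjm; omega
  rw [show j = P.L m + (j - P.L m) by omega, P.x_L_add ht]
  exact P.getD_mem (hS m hm) ht

/-- Images cannot stall: `L (j + 1) = j + 1` would give `L (L (j + 1)) = L (j + 1)`,
contradicting `L ∘ L = k • L` with `k ≥ 2`. -/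
theorem succ_lt_L_succ {j : ℕ} (hS : ∀ i ≤ j, P.x i ∈ P.S) (hj : j < P.L j) :
    j + 1 < P.L (j + 1) := by
  by_contra hcon
  have hfix : P.L (j + 1) = j + 1 := le_antisymm (by omega) (by linarith [P.L_mono j.le_succ])
  have hLL := P.L_L_of_forall_mem (n := j + 1) fun i hi => hS i (by omega)
  rw [hfix, hfix] at hLL
  have := P.two_le_k
  unfold k at hLL
  nlinarith

theorem forall_mem_and_lt_L {m : ℕ} (hm : 1 ≤ m) :
    (∀ j < m, P.x j ∈ P.S) ∧ m < P.L m := by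
  induction m, hm using Nat.le_induction with
  | base =>
    refine ⟨fun j hj => by rw [Nat.lt_one_iff.1 hj, x_zero]; exact P.a_mem, ?_⟩
    rw [show 1 = 0 + 1 from rfl, L_succ, x_zero]
    simp only [L, sum_range_zero, zero_add]
    exact P.two_le_length
  | succ m _ ih =>
    have hS : ∀ j ≤ m, P.x j ∈ P.S := fun j hj =>
      hj.lt_or_eq.elim (ih.1 j) fun h => h ▸ P.x_mem_of_lt_L ih.1 ih.2
    exact ⟨fun j hj => hS j (by omega), P.succ_lt_L_succ hS ih.2⟩

theorem x_mem (j : ℕ) : P.x j ∈ P.S := (P.forall_mem_and_lt_L j.succ_pos).1 j j.lt_succ_self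

theorem L_L_add {μ τ : ℕ} (hτ : τ ≤ P.len (P.x μ)) :
    P.L (P.L μ + τ) = P.k * P.L μ + P.innerStart (P.x μ) τ := by
  rw [P.L_L_add_eq hτ, P.L_L_of_forall_mem fun j _ => P.x_mem j]

theorem exists_eq_L_add (i : ℕ) : ∃ m t, t < P.len (P.x m) ∧ i = P.L m + t := by
  obtain ⟨m, -, hmi, him⟩ :=
    P.exists_block_of_lt_L (i.lt_succ_self.trans (P.forall_mem_and_lt_L i.succ_pos).2)
  rw [L_succ] at him
  exact ⟨m, i - P.L m, by omega, by omega⟩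

theorem blockSum_L_add {m t : ℕ} (ht : t ≤ P.len (P.x m)) :
    blockSum P.x (P.L m) t = ∑ u ∈ range t, (P.f (P.x m)).getD u 0 :=
  sum_congr rfl fun _ hu => P.x_L_add (lt_of_lt_of_le (mem_range.1 hu) ht)

theorem len_a_mul_blockSum_L (m : ℕ) :
    P.len P.a * blockSum P.x 0 (P.L m) = (P.f P.a).sum * P.L m := by
  induction m with
  | zero => simp [L, blockSum]
  | succ m ih =>
    have himage : blockSum P.x (P.L m) (P.len (P.x m)) = (P.f (P.x m)).sum := by
      rw [P.blockSum_L_add le_rfl]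
      exact (sum_range_length_getD (P.f (P.x m)) 0 id).trans (by simp)
    rw [L_succ, blockSum_add, zero_add, himage, mul_add, ih, P.len_a_mul_sum (P.x_mem m), mul_add]

/-- The discrepancy of the length-`i` prefix from the letter frequencies of `f a`. -/
def disc (i : ℕ) : ℤ := P.len P.a * blockSum P.x 0 i - (P.f P.a).sum * i

def blockDisc (b t : ℕ) : ℤ :=
  P.len P.a * ∑ u ∈ range t, ((P.f b).getD u 0 : ℤ) - (P.f P.a).sum * t

theorem disc_L_add {m t : ℕ} (ht : t ≤ P.len (P.x m)) :
    P.disc (P.L m + t) = P.blockDisc (P.x m) t := by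
  have hL : (P.len P.a * blockSum P.x 0 (P.L m) : ℤ) = (P.f P.a).sum * P.L m := by
    exact_mod_cast P.len_a_mul_blockSum_L m
  have hblock := congrArg (Nat.cast : ℕ → ℤ) (P.blockSum_L_add ht)
  push_cast at hblock
  rw [disc, blockDisc, blockSum_add, zero_add, ← hblock]
  simp only [Nat.cast_add]
  linear_combination hL

theorem disc_add_sub (i n : ℕ) :
    P.disc (i + n) - P.disc i = P.len P.a * blockSum P.x i n - (P.f P.a).sum * n := by
  rw [disc, disc, blockSum_add, zero_add]
  push_cast
  ring

def discDiffs (n : ℕ) : Set ℤ := Set.range fun i => P.disc (i + n) - P.disc i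

theorem addComplexity_eq_ncard_discDiffs (n : ℕ) :
    addComplexity P.x n = (P.discDiffs n).ncard := by
  have hinj : Function.Injective fun v : ℕ => (P.len P.a * v - (P.f P.a).sum * n : ℤ) := by
    intro v w h
    have := P.len_a_pos
    simp only [sub_left_inj, mul_eq_mul_left_iff, Nat.cast_inj] at h
    omega
  have himage : P.discDiffs n =
      (fun v : ℕ => (P.len P.a * v - (P.f P.a).sum * n : ℤ)) ''
        Set.range (blockSum P.x · n) := by
    rw [← Set.range_comp, discDiffs]
    simp only [Function.comp_def, disc_add_sub]
  rw [himage, Set.ncard_image_of_injective _ hinj, addComplexity]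
  rfl

def Occurs (b b' : ℕ) (w : ℤ) : Prop :=
  ∃ m m', P.x m = b ∧ P.x m' = b' ∧ (P.L m' : ℤ) = P.L m + w

theorem discDiffs_eq (n : ℕ) : P.discDiffs n =
    {d | ∃ b ∈ P.S, ∃ b' ∈ P.S, ∃ t < P.len b, ∃ t' < P.len b',
      P.Occurs b b' (n + t - t') ∧ d = P.blockDisc b' t' - P.blockDisc b t} := by
  ext d
  constructor
  · rintro ⟨i, rfl⟩
    obtain ⟨m, t, ht, rfl⟩ := P.exists_eq_L_add i
    obtain ⟨m', t', ht', hi⟩ := P.exists_eq_L_add (P.L m + t + n)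
    refine ⟨_, P.x_mem m, _, P.x_mem m', t, ht, t', ht', ⟨m, m', rfl, rfl, by omega⟩, ?_⟩
    show P.disc (P.L m + t + n) - _ = _
    rw [hi, P.disc_L_add ht'.le, P.disc_L_add ht.le]
  · rintro ⟨b, -, b', -, t, ht, t', ht', ⟨m, m', rfl, rfl, hL⟩, rfl⟩
    refine ⟨P.L m + t, ?_⟩
    show P.disc (P.L m + t + n) - _ = _
    rw [show P.L m + t + n = P.L m' + t' by omega, P.disc_L_add ht'.le, P.disc_L_add ht.le]

theorem occurs_iff (b b' : ℕ) (w : ℤ) : P.Occurs b b' w ↔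
    ∃ c ∈ P.S, ∃ c' ∈ P.S, ∃ τ < P.len c, ∃ τ' < P.len c', ∃ v : ℤ,
      (P.f c).getD τ 0 = b ∧ (P.f c').getD τ' 0 = b' ∧ P.Occurs c c' v ∧
      w = P.k * v + P.innerStart c' τ' - P.innerStart c τ := by
  constructor
  · rintro ⟨m, m', rfl, rfl, hw⟩
    obtain ⟨μ, τ, hτ, rfl⟩ := P.exists_eq_L_add m
    obtain ⟨μ', τ', hτ', rfl⟩ := P.exists_eq_L_add m'
    refine ⟨_, P.x_mem μ, _, P.x_mem μ', τ, hτ, τ', hτ', P.L μ' - P.L μ,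
      (P.x_L_add hτ).symm, (P.x_L_add hτ').symm, ⟨μ, μ', rfl, rfl, by ring⟩, ?_⟩
    rw [P.L_L_add hτ.le, P.L_L_add hτ'.le] at hw
    push_cast at hw
    linear_combination -hw
  · rintro ⟨c, -, c', -, τ, hτ, τ', hτ', v, rfl, rfl, ⟨μ, μ', rfl, rfl, hv⟩, rfl⟩
    refine ⟨P.L μ + τ, P.L μ' + τ', P.x_L_add hτ, P.x_L_add hτ', ?_⟩
    rw [P.L_L_add hτ.le, P.L_L_add hτ'.le]
    push_cast
    linear_combination P.k * hv

def R : ℕ := P.S.sup P.len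

theorem len_le_R {b : ℕ} (hb : b ∈ P.S) : P.len b ≤ P.R := le_sup hb

/-- Large enough that the parent distance of a distance within `C` of `k * n + r` is within
`C` of `n`. -/
def C : ℕ := P.k * P.R + P.k

theorem R_le_C : P.R ≤ P.C := by
  have := P.two_le_k
  unfold C k at *
  nlinarith

theorem occurs_mul_add_of_window {n n' r : ℕ} (hr : r < P.k)
    (hw : ∀ c ∈ P.S, ∀ c' ∈ P.S, ∀ ε : ℤ, |ε| ≤ P.C →
      P.Occurs c c' (n + ε) → P.Occurs c c' (n' + ε))
    {b b' : ℕ} {e : ℤ} (he : |e| ≤ P.C) (h : P.Occurs b b' ((P.k * n + r : ℕ) + e)) :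
    P.Occurs b b' ((P.k * n' + r : ℕ) + e) := by
  obtain ⟨c, hc, c', hc', τ, hτ, τ', hτ', v, hb, hb', hv, hkv⟩ := (P.occurs_iff ..).1 h
  have hα := P.innerStart_le hc hτ.le
  have hα' := P.innerStart_le hc' hτ'.le
  have hRc := Nat.mul_le_mul_left P.k (P.len_le_R hc)
  have hRc' := Nat.mul_le_mul_left P.k (P.len_le_R hc')
  have hk : (2 : ℤ) ≤ P.k := by exact_mod_cast P.two_le_k
  have hC : (P.C : ℤ) = P.k * P.R + P.k := by simp [C]
  push_cast at hkv
  have hε : |v - n| ≤ P.C := by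
    rw [abs_le] at he ⊢
    have hR : (0 : ℤ) ≤ P.R := by positivity
    constructor <;> nlinarith
  refine (P.occurs_iff ..).2 ⟨c, hc, c', hc', τ, hτ, τ', hτ', n' + (v - n), hb, hb', ?_, ?_⟩
  · exact hw c hc c' hc' _ hε (by rwa [add_sub_cancel])
  · push_cast
    linear_combination hkv

def window (n : ℕ) : Set (P.S × P.S × Set.Icc (-(P.C : ℤ)) P.C) :=
  {p | P.Occurs p.1 p.2.1 (n + p.2.2)}

theorem occurs_of_window_eq {n n' : ℕ} (h : P.window n = P.window n') {b b' : ℕ}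
    (hb : b ∈ P.S) (hb' : b' ∈ P.S) {e : ℤ} (he : |e| ≤ P.C)
    (hocc : P.Occurs b b' (n + e)) :
    P.Occurs b b' (n' + e) :=
  (Set.ext_iff.1 h ⟨⟨b, hb⟩, ⟨b', hb'⟩, ⟨e, abs_le.1 he⟩⟩).1 hocc

theorem discDiffs_subset_of_window_eq {n n' : ℕ} (h : P.window n = P.window n') :
    P.discDiffs n ⊆ P.discDiffs n' := by
  rw [discDiffs_eq, discDiffs_eq]
  rintro d ⟨b, hb, b', hb', t, ht, t', ht', hocc, rfl⟩
  refine ⟨b, hb, b', hb', t, ht, t', ht', ?_, rfl⟩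
  have := P.R_le_C
  have hdist : |(t : ℤ) - t'| ≤ P.C := by
    have := P.len_le_R hb
    have := P.len_le_R hb'
    rw [abs_le]
    constructor <;> omega
  simpa only [add_sub_assoc] using P.occurs_of_window_eq h hb hb' hdist (by rwa [← add_sub_assoc])

theorem addComplexity_factorsThrough : (addComplexity P.x).FactorsThrough P.window :=
  fun n n' h => by
    rw [addComplexity_eq_ncard_discDiffs, addComplexity_eq_ncard_discDiffs,
      (P.discDiffs_subset_of_window_eq h).antisymm (P.discDiffs_subset_of_window_eq h.symm)]

theorem window_mul_add_factorsThrough {r : ℕ} (hr : r < P.k) :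
    (fun n => P.window (P.k * n + r)).FactorsThrough P.window := fun n n' h => by
  ext ⟨⟨b, hb⟩, ⟨b', hb'⟩, ⟨e, he⟩⟩
  have he' : |e| ≤ P.C := abs_le.2 he
  exact ⟨P.occurs_mul_add_of_window hr
      (fun _ hc _ hc' _ hε => P.occurs_of_window_eq h hc hc' hε) he',
    P.occurs_mul_add_of_window hr
      (fun _ hc _ hc' _ hε => P.occurs_of_window_eq h.symm hc hc' hε) he'⟩

theorem finite_addComplexity_kernel :
    {g : ℕ → ℕ | ∃ e r : ℕ, r < P.k ^ e ∧
      g = fun n => addComplexity P.x (P.k ^ e * n + r)}.Finite :=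
  finite_kernel_of_factorsThrough (by have := P.two_le_k; unfold k; omega) P.window
    P.addComplexity_factorsThrough fun _ hr => P.window_mul_add_factorsThrough hr

end CollinearFixedPoint

theorem parikh_collinear_additive_complexity_automatic_general
    (S : Finset ℕ) (f : ℕ → List ℕ)
    (hclosed : ∀ b ∈ S, ∀ c ∈ f b, c ∈ S)
    (hcollinear : ∀ b ∈ S, ∀ b' ∈ S, ∃ p q : ℕ, ¬(p = 0 ∧ q = 0) ∧
      ∀ c ∈ S, p * (f b).count c = q * (f b').count c)
    (a : ℕ) (ha : a ∈ S)
    (hlen : 2 ≤ (f a).length)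
    (x : ℕ → ℕ) (hx : IsFixedPointOf f a x) :
    Set.Finite {g : ℕ → ℕ | ∃ e r : ℕ, r < (∑ b ∈ S, (f b).count b) ^ e ∧
      g = fun n => addComplexity x ((∑ b ∈ S, (f b).count b) ^ e * n + r)} := by
  rcases lt_or_ge (∑ b ∈ S, (f b).count b) 2 with hk | hk
  · exact finite_kernel_of_le_one (by omega) _
  · exact CollinearFixedPoint.finite_addComplexity_kernel
      ⟨S, f, a, x, hclosed, hcollinear, ha, hlen, hx, hk⟩

/-- The additive complexity of the fixed point of a Parikh-collinear morphism is
k-automatic, where k = ∑_{b∈Σ} |f(b)|_b: its k-kernel is finite. -/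
theorem parikh_collinear_additive_complexity_automatic
    (S : Finset ℕ) (f : ℕ → List ℕ)
    (hclosed : ∀ b ∈ S, ∀ c ∈ f b, c ∈ S)
    (hcollinear : ∀ b ∈ S, ∀ b' ∈ S, ∃ p q : ℕ, ¬(p = 0 ∧ q = 0) ∧
      ∀ c ∈ S, p * (f b).count c = q * (f b').count c)
    (a : ℕ) (ha : a ∈ S)
    (hstart : (f a).head? = some a) (hlen : 2 ≤ (f a).length)
    (x : ℕ → ℕ) (hx : IsFixedPointOf f a x) :
    Set.Finite {g : ℕ → ℕ | ∃ e r : ℕ, r < (∑ b ∈ S, (f b).count b) ^ e ∧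
      g = fun n => addComplexity x ((∑ b ∈ S, (f b).count b) ^ e * n + r)} :=
  parikh_collinear_additive_complexity_automatic_general S f hclosed hcollinear a ha hlen x hx
end

section
/- Let x : ℕ → ℕ be the fixed point starting with 0 of the morphism f on {0,1,2} given by 0→012, 1→112002, 2→ε (the empty word), so x = 012112002112002⋯. Then the additive complexity of x is the word 1 3 4 (3 5 5)^ω: ρ⁺_x(0) = 1, ρ⁺_x(1) = 3, ρ⁺_x(2) = 4, and for all n ≥ 3, ρ⁺_x(n) = 3 if 3 divides n and ρ⁺_x(n) = 5 otherwise. -/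
/-- The morphism 0→012, 1→112002, 2→ε. -/
def pcMorphism : ℕ → List ℕ :=
  fun a => if a = 0 then [0, 1, 2] else if a = 1 then [1, 1, 2, 0, 0, 2] else []

/-!
The fixed point is `x = β(W 0) β(W 1) β(W 2) ⋯` with blocks `β 0 = 012`, `β 1 = 112`,
`β 2 = 002`, where `W` is the fixed point of the 3-uniform morphism
`0 ↦ 012, 1 ↦ 121, 2 ↦ 200`. The potential `ψ i = i + 1 - (x 0 + ⋯ + x (i - 1))` takes values
in `{1, 2}` at positions `≡ 0 mod 3` and in `{0, 1}` elsewhere, and the factor of length `n` at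
`i` sums to `n + ψ (i + n) - ψ i`; so these sums lie in `[n - 1, n + 1]` if `3 ∣ n` and in
`[n - 2, n + 2]` otherwise. Once `n ≥ 9` all these values occur: `ψ (3 s + a)` is determined by
`W s` and `a`, and every pair of letters occurs in `W` at every distance `d ≥ 3`, because
`W (3 s) = W s` and `W (3 s + e)` is a bijective function of `W s`. Shorter factors are checked
by computation.
-/

open Finset

theorem exists_sum_range_le_lt {g : ℕ → ℕ} {i M : ℕ} (h : i < ∑ k ∈ range M, g k) :
    ∃ n < M, ∑ k ∈ range n, g k ≤ i ∧ i < ∑ k ∈ range (n + 1), g k := by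
  induction M with
  | zero => simp at h
  | succ M ih =>
    by_cases hM : i < ∑ k ∈ range M, g k
    · obtain ⟨n, hn, hle, hlt⟩ := ih hM
      exact ⟨n, by omega, hle, hlt⟩
    · exact ⟨M, by omega, by omega, h⟩

theorem IsFixedPointOf.eq {f : ℕ → List ℕ} {a₀ : ℕ} {x y : ℕ → ℕ}
    (hx : IsFixedPointOf f a₀ x) (hy : IsFixedPointOf f a₀ y)
    (hgrow : ∀ m, 0 < m → m < ∑ k ∈ range m, (f (y k)).length) : x = y := by
  funext i
  induction i using Nat.strong_induction_on with
  | _ i ih =>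
  rcases Nat.eq_zero_or_pos i with rfl | hi
  · rw [hx.1, hy.1]
  obtain ⟨n, hn, hle, hlt⟩ := exists_sum_range_le_lt (hgrow i hi)
  obtain ⟨j, rfl⟩ := Nat.exists_eq_add_of_le hle
  rw [sum_range_succ] at hlt
  have hxn : x n = y n := ih n (by omega)
  have hsum : ∑ k ∈ range n, (f (x k)).length = ∑ k ∈ range n, (f (y k)).length :=
    sum_congr rfl fun k hk => by rw [ih k (by simp at hk; omega)]
  rw [← hsum, hx.2 n j (by rw [hxn]; omega), hsum, hxn, hy.2 n j (by omega)]

theorem blockSum_add_of_potential {x ψ : ℕ → ℕ} (h : ∀ i, ψ i + x i = ψ (i + 1) + 1)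
    (i n : ℕ) : blockSum x i n + ψ i = n + ψ (i + n) := by
  induction n with
  | zero => simp [blockSum]
  | succ n ih =>
    have := h (i + n)
    rw [blockSum, sum_range_succ, ← blockSum, ← add_assoc i n 1]
    omega

theorem addComplexity_eq_of_range_eq_Icc {x : ℕ → ℕ} {n lo hi : ℕ}
    (h : Set.range (blockSum x · n) = Set.Icc lo hi) : addComplexity x n = hi + 1 - lo := by
  rw [addComplexity, ← Set.ncard_Icc_nat, ← h]
  rfl

theorem addComplexity_zero (x : ℕ → ℕ) : addComplexity x 0 = 1 := by
  simpa using addComplexity_eq_of_range_eq_Icc (x := x) (n := 0) (lo := 0) (hi := 0)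
    (by ext; simp [blockSum])

theorem exists_three_mul_add (n : ℕ) : ∃ t r, r < 3 ∧ n = 3 * t + r :=
  ⟨n / 3, n % 3, Nat.mod_lt _ (by norm_num), (Nat.div_add_mod n 3).symm⟩

theorem ofNat_three_eq_of_mod_eq {a b : ℕ} (h : a % 3 = b % 3) : Fin.ofNat 3 a = Fin.ofNat 3 b :=
  Fin.ext (by simpa only [Fin.val_ofNat])

namespace pcMorphism

def blockSubst : Fin 3 → Fin 3 → Fin 3 := ![![0, 1, 2], ![1, 2, 1], ![2, 0, 0]]

-- Recursion on fuel rather than well-founded recursion, so that `decide` can evaluate it.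
def blockTypeAux : ℕ → ℕ → Fin 3
  | 0, _ => 0
  | k + 1, n => if n = 0 then 0 else blockSubst (blockTypeAux k (n / 3)) (Fin.ofNat 3 n)

def blockType (n : ℕ) : Fin 3 := blockTypeAux n n

theorem blockTypeAux_eq_of_le {k l n : ℕ} (hk : n ≤ k) (hl : n ≤ l) :
    blockTypeAux k n = blockTypeAux l n := by
  induction k generalizing l n with
  | zero =>
    obtain rfl : n = 0 := by omega
    cases l <;> rfl
  | succ k ih =>
    rcases Nat.eq_zero_or_pos n with rfl | hn
    · cases l <;> rfl
    obtain ⟨l, rfl⟩ : ∃ l', l = l' + 1 := ⟨l - 1, by omega⟩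
    simp only [blockTypeAux, ih (l := l) (n := n / 3) (by omega) (by omega)]

theorem blockType_three_mul_add (t : ℕ) {r : ℕ} (hr : r < 3) :
    blockType (3 * t + r) = blockSubst (blockType t) (Fin.ofNat 3 r) := by
  rcases Nat.eq_zero_or_pos (3 * t + r) with h | h
  · obtain ⟨rfl, rfl⟩ : t = 0 ∧ r = 0 := by omega
    rfl
  obtain ⟨k, hk⟩ : ∃ k, 3 * t + r = k + 1 := ⟨3 * t + r - 1, by omega⟩
  rw [blockType, hk, blockTypeAux, if_neg k.succ_ne_zero, blockTypeAux_eq_of_le (by omega) le_rfl,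
    ← hk, show (3 * t + r) / 3 = t by omega, ofNat_three_eq_of_mod_eq (by omega : _ % 3 = r % 3)]
  rfl

theorem blockSubst_zero (u : Fin 3) : blockSubst u 0 = u := by
  revert u; decide

theorem blockType_three_mul (t : ℕ) : blockType (3 * t) = blockType t := by
  simpa [blockSubst_zero] using blockType_three_mul_add t (r := 0) (by norm_num)

theorem blockType_succ_eq_two_iff (t : ℕ) : blockType (t + 1) = 2 ↔ blockType t = 1 := by
  induction t using Nat.strong_induction_on with
  | _ t ih =>
  obtain ⟨q, r, hr, rfl⟩ := exists_three_mul_add t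
  rcases (by omega : r < 2 ∨ r = 2) with hr2 | rfl
  · rw [add_assoc, blockType_three_mul_add q hr, blockType_three_mul_add q (by omega : r + 1 < 3)]
    generalize blockType q = u
    clear ih
    revert u r; decide
  · have := ih q (by omega)
    rw [show 3 * q + 2 + 1 = 3 * (q + 1) by ring, blockType_three_mul_add q (by omega : 2 < 3),
      blockType_three_mul]
    revert this
    generalize blockType q = u
    generalize blockType (q + 1) = u'
    revert u u'; decide

def ofBlocks (T : Fin 3 → Fin 3 → ℕ) (n : ℕ) : ℕ := T (blockType (n / 3)) (Fin.ofNat 3 n)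

theorem ofBlocks_three_mul_add (T : Fin 3 → Fin 3 → ℕ) (t : ℕ) {r : ℕ} (hr : r < 3) :
    ofBlocks T (3 * t + r) = T (blockType t) (Fin.ofNat 3 r) := by
  rw [ofBlocks, show (3 * t + r) / 3 = t by omega,
    ofNat_three_eq_of_mod_eq (by omega : _ % 3 = r % 3)]

def block : Fin 3 → Fin 3 → ℕ := ![![0, 1, 2], ![1, 1, 2], ![0, 0, 2]]

def fixedPoint : ℕ → ℕ := ofBlocks block

theorem fixedPoint_three_mul_add (t : ℕ) {r : ℕ} (hr : r < 3) :
    fixedPoint (3 * t + r) = block (blockType t) (Fin.ofNat 3 r) :=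
  ofBlocks_three_mul_add block t hr

/-- A block of type `1` has an image of length `12` and is always followed by a block of type `2`,
whose image has length `6`; this is the source of the correction `3` for `u = 2`. -/
def offset (u : Fin 3) (o : ℕ) : ℕ :=
  3 * (if u = 2 then 1 else 0) + ∑ r ∈ range o, (pcMorphism (block u (Fin.ofNat 3 r))).length

theorem sum_length_three_mul_add_of_le (t : ℕ) {m : ℕ} (hm : m ≤ 3) :
    ∑ k ∈ range (3 * t + m), (pcMorphism (fixedPoint k)).length =
      ∑ k ∈ range (3 * t), (pcMorphism (fixedPoint k)).length +
        ∑ r ∈ range m, (pcMorphism (block (blockType t) (Fin.ofNat 3 r))).length := by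
  rw [sum_range_add]
  congr 1
  refine sum_congr rfl fun r hr => ?_
  rw [fixedPoint_three_mul_add t (by simp at hr; omega)]

theorem sum_length_three_mul (t : ℕ) :
    ∑ k ∈ range (3 * t), (pcMorphism (fixedPoint k)).length =
      9 * t + offset (blockType t) 0 := by
  induction t with
  | zero => rfl
  | succ t ih =>
    have key : ∀ u u' : Fin 3, (u' = 2 ↔ u = 1) →
        offset u 0 + ∑ r ∈ range 3, (pcMorphism (block u (Fin.ofNat 3 r))).length =
          9 + offset u' 0 := by decide
    rw [mul_add, mul_one, sum_length_three_mul_add_of_le t le_rfl, ih, add_assoc,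
      key _ _ (blockType_succ_eq_two_iff t)]
    ring

theorem sum_length_three_mul_add (t : ℕ) {o : ℕ} (ho : o < 3) :
    ∑ k ∈ range (3 * t + o), (pcMorphism (fixedPoint k)).length =
      9 * t + offset (blockType t) o := by
  rw [sum_length_three_mul_add_of_le t ho.le, sum_length_three_mul, offset, offset, sum_range_zero]
  ring

theorem lt_sum_length {m : ℕ} (hm : 0 < m) :
    m < ∑ k ∈ range m, (pcMorphism (fixedPoint k)).length := by
  obtain ⟨t, o, ho, rfl⟩ := exists_three_mul_add m
  have key : ∀ u : Fin 3, ∀ o < 3, 3 * o ≤ offset u o := by decide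
  have := key (blockType t) o ho
  rw [sum_length_three_mul_add t ho]
  omega

/-- The letters of `fixedPoint` at `9 t, …, 9 t + 11` when `u = blockType t` and
`u' = blockType (t + 1)`: they contain the images of the letters at `3 t, 3 t + 1, 3 t + 2`. -/
def window (u u' : Fin 3) (m : ℕ) : ℕ :=
  block (if m / 3 < 3 then blockSubst u (Fin.ofNat 3 (m / 3)) else u') (Fin.ofNat 3 m)

theorem fixedPoint_nine_mul_add (t : ℕ) {m : ℕ} (hm : m < 12) :
    fixedPoint (9 * t + m) = window (blockType t) (blockType (t + 1)) m := by
  rw [show 9 * t + m = 3 * (3 * t + m / 3) + m % 3 by omega,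
    fixedPoint_three_mul_add _ (Nat.mod_lt _ (by norm_num)), window,
    ofNat_three_eq_of_mod_eq (Nat.mod_mod m 3)]
  split_ifs with h
  · rw [blockType_three_mul_add t h]
  · rw [show 3 * t + m / 3 = 3 * (t + 1) by omega, blockType_three_mul]

theorem isFixedPointOf_fixedPoint : IsFixedPointOf pcMorphism 0 fixedPoint := by
  refine ⟨rfl, fun n j hj => ?_⟩
  have key : ∀ u u' : Fin 3, (u' = 2 ↔ u = 1) → ∀ o < 3,
      ∀ j < (pcMorphism (block u (Fin.ofNat 3 o))).length, offset u o + j < 12 ∧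
        window u u' (offset u o + j) = (pcMorphism (block u (Fin.ofNat 3 o))).getD j 0 := by
    decide
  obtain ⟨t, o, ho, rfl⟩ := exists_three_mul_add n
  rw [fixedPoint_three_mul_add t ho] at hj ⊢
  obtain ⟨hlt, heq⟩ := key _ _ (blockType_succ_eq_two_iff t) o ho j hj
  rw [sum_length_three_mul_add t ho, add_assoc, fixedPoint_nine_mul_add t hlt, heq]

-- Chosen so that `potential i + ∑ k < i, fixedPoint k = i + 1`.
def potentialTable : Fin 3 → Fin 3 → ℕ := ![![1, 0, 0], ![1, 1, 1], ![2, 1, 0]]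

def potential : ℕ → ℕ := ofBlocks potentialTable

theorem potential_add_fixedPoint (i : ℕ) :
    potential i + fixedPoint i = potential (i + 1) + 1 := by
  obtain ⟨t, o, ho, rfl⟩ := exists_three_mul_add i
  rw [potential, fixedPoint, ofBlocks_three_mul_add _ t ho, ofBlocks_three_mul_add _ t ho]
  rcases (by omega : o < 2 ∨ o = 2) with ho2 | rfl
  · rw [add_assoc, ofBlocks_three_mul_add _ t (by omega : o + 1 < 3)]
    generalize blockType t = u
    revert u o; decide
  · rw [show 3 * t + 2 + 1 = 3 * (t + 1) + 0 by ring, ofBlocks_three_mul_add _ _ (by norm_num)]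
    have := blockType_succ_eq_two_iff t
    revert this
    generalize blockType t = u
    generalize blockType (t + 1) = u'
    revert u u'; decide

theorem blockSum_fixedPoint_three_mul_add (s d : ℕ) {a : ℕ} (e : ℕ) (ha : a < 3) :
    blockSum fixedPoint (3 * s + a) (3 * d + e) +
        potentialTable (blockType s) (Fin.ofNat 3 a) =
      3 * d + e + potentialTable (blockType (s + (d + (a + e) / 3))) (Fin.ofNat 3 (a + e)) := by
  have h := blockSum_add_of_potential potential_add_fixedPoint (3 * s + a) (3 * d + e)
  rwa [potential, ofBlocks_three_mul_add _ _ ha,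
    show 3 * s + a + (3 * d + e) = 3 * (s + (d + (a + e) / 3)) + (a + e) % 3 by omega,
    ofBlocks_three_mul_add _ _ (Nat.mod_lt _ (by norm_num)),
    ofNat_three_eq_of_mod_eq (Nat.mod_mod (a + e) 3)] at h

def radius (n : ℕ) : ℕ := if 3 ∣ n then 1 else 2

theorem radius_three_mul_add (d e : ℕ) : radius (3 * d + e) = radius e := by
  simp only [radius, Nat.dvd_add_right (dvd_mul_right 3 d)]

theorem blockSum_fixedPoint_mem_Icc (i n : ℕ) :
    blockSum fixedPoint i n ∈ Set.Icc (n - radius n) (n + radius n) := by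
  have key : ∀ u v : Fin 3, ∀ a < 3, ∀ e < 3,
      potentialTable u (Fin.ofNat 3 a) ≤ potentialTable v (Fin.ofNat 3 (a + e)) + radius e ∧
        potentialTable v (Fin.ofNat 3 (a + e)) ≤ potentialTable u (Fin.ofNat 3 a) + radius e := by
    decide
  obtain ⟨s, a, ha, rfl⟩ := exists_three_mul_add i
  obtain ⟨d, e, he, rfl⟩ := exists_three_mul_add n
  have h := blockSum_fixedPoint_three_mul_add s d e ha
  have := key (blockType s) (blockType (s + (d + (a + e) / 3))) a ha e he
  rw [radius_three_mul_add, Set.mem_Icc]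
  omega

theorem exists_blockType_eq_and_blockType_add_eq {d : ℕ} (hd : 3 ≤ d) (u v : Fin 3) :
    ∃ s, blockType s = u ∧ blockType (s + d) = v := by
  induction d using Nat.strong_induction_on generalizing v with
  | _ d ih =>
  rcases (by omega : d < 9 ∨ 9 ≤ d) with h9 | h9
  · have key : ∀ d ∈ Finset.Ico 3 9, ∀ u v : Fin 3,
        ∃ s < 66, blockType s = u ∧ blockType (s + d) = v := by
      decide +kernel
    obtain ⟨s, -, hs⟩ := key d (Finset.mem_Ico.2 ⟨hd, h9⟩) u v
    exact ⟨s, hs⟩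
  obtain ⟨d', e, he, rfl⟩ := exists_three_mul_add d
  have hsurj : ∀ e < 3, ∀ v, ∃ v', blockSubst v' (Fin.ofNat 3 e) = v := by decide
  obtain ⟨v', rfl⟩ := hsurj e he v
  obtain ⟨s, hs, hs'⟩ := ih d' (by omega) (by omega) v'
  refine ⟨3 * s, by rw [blockType_three_mul, hs], ?_⟩
  rw [show 3 * s + (3 * d' + e) = 3 * (s + d') + e by ring, blockType_three_mul_add _ he, hs']

theorem exists_blockSum_fixedPoint_eq {n : ℕ} (hn : 3 ≤ n) {k : ℕ} (hk : k ≤ 2 * radius n) :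
    ∃ i, blockSum fixedPoint i n + radius n = n + k := by
  rcases (by omega : n < 9 ∨ 9 ≤ n) with h9 | h9
  · have key : ∀ n ∈ Finset.Ico 3 9, ∀ k ≤ 2 * radius n,
        ∃ i < 24, blockSum fixedPoint i n + radius n = n + k := by
      decide +kernel
    obtain ⟨i, -, hi⟩ := key n (Finset.mem_Ico.2 ⟨hn, h9⟩) k hk
    exact ⟨i, hi⟩
  have key : ∀ e < 3, ∀ k ≤ 2 * radius e, ∃ u v : Fin 3, ∃ a < 3,
      potentialTable v (Fin.ofNat 3 (a + e)) + radius e = k + potentialTable u (Fin.ofNat 3 a) := by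
    decide
  obtain ⟨d, e, he, rfl⟩ := exists_three_mul_add n
  rw [radius_three_mul_add] at hk ⊢
  obtain ⟨u, v, a, ha, huv⟩ := key e he k hk
  obtain ⟨s, rfl, hs⟩ :=
    exists_blockType_eq_and_blockType_add_eq (d := d + (a + e) / 3) (by omega) u v
  have h := blockSum_fixedPoint_three_mul_add s d e ha
  rw [hs] at h
  exact ⟨3 * s + a, by omega⟩

theorem addComplexity_fixedPoint_of_three_le {n : ℕ} (hn : 3 ≤ n) :
    addComplexity fixedPoint n = 2 * radius n + 1 := by
  have hr : radius n ≤ 2 := by unfold radius; split_ifs <;> omega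
  rw [addComplexity_eq_of_range_eq_Icc (lo := n - radius n) (hi := n + radius n)]
  · omega
  refine Set.Subset.antisymm ?_ fun b hb => ?_
  · rintro _ ⟨i, rfl⟩
    exact blockSum_fixedPoint_mem_Icc i n
  · rw [Set.mem_Icc] at hb
    obtain ⟨i, hi⟩ := exists_blockSum_fixedPoint_eq hn (k := b + radius n - n) (by omega)
    exact ⟨i, show blockSum fixedPoint i n = b by omega⟩

theorem fixedPoint_le_two (i : ℕ) : fixedPoint i ≤ 2 := by
  obtain ⟨t, o, ho, rfl⟩ := exists_three_mul_add i
  rw [fixedPoint_three_mul_add t ho]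
  generalize blockType t = u
  revert u o; decide

theorem fixedPoint_eq_two_iff (i : ℕ) : fixedPoint i = 2 ↔ i % 3 = 2 := by
  obtain ⟨t, o, ho, rfl⟩ := exists_three_mul_add i
  rw [fixedPoint_three_mul_add t ho, show (3 * t + o) % 3 = o by omega]
  generalize blockType t = u
  revert u o; decide

theorem addComplexity_fixedPoint_one : addComplexity fixedPoint 1 = 3 := by
  rw [addComplexity_eq_of_range_eq_Icc (lo := 0) (hi := 2)]
  refine Set.Subset.antisymm ?_ fun b hb => ?_
  · rintro _ ⟨i, rfl⟩
    simpa [blockSum] using fixedPoint_le_two i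
  · have key : ∀ b ≤ 2, ∃ i < 3, blockSum fixedPoint i 1 = b := by decide
    obtain ⟨i, -, hi⟩ := key b hb.2
    exact ⟨i, hi⟩

theorem addComplexity_fixedPoint_two : addComplexity fixedPoint 2 = 4 := by
  rw [addComplexity_eq_of_range_eq_Icc (lo := 0) (hi := 3)]
  refine Set.Subset.antisymm ?_ fun b hb => ?_
  · rintro _ ⟨i, rfl⟩
    have h₀ := fixedPoint_eq_two_iff i
    have h₁ := fixedPoint_eq_two_iff (i + 1)
    have := fixedPoint_le_two i
    have := fixedPoint_le_two (i + 1)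
    simp only [blockSum, sum_range_succ, sum_range_zero, add_zero, zero_add, Set.mem_Icc]
    omega
  · have key : ∀ b ≤ 3, ∃ i < 7, blockSum fixedPoint i 2 = b := by decide
    obtain ⟨i, -, hi⟩ := key b hb.2
    exact ⟨i, hi⟩

end pcMorphism

/-- The additive complexity of the fixed point of 0→012, 1→112002, 2→ε is
1 3 4 (3 5 5)^ω. -/
theorem pc_example_additive_complexity (x : ℕ → ℕ)
    (hx : IsFixedPointOf pcMorphism 0 x) :
    addComplexity x 0 = 1 ∧ addComplexity x 1 = 3 ∧ addComplexity x 2 = 4 ∧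
    ∀ n, 3 ≤ n → addComplexity x n = if 3 ∣ n then 3 else 5 := by
  obtain rfl := hx.eq pcMorphism.isFixedPointOf_fixedPoint fun _ => pcMorphism.lt_sum_length
  refine ⟨addComplexity_zero _, pcMorphism.addComplexity_fixedPoint_one,
    pcMorphism.addComplexity_fixedPoint_two, fun n hn => ?_⟩
  rw [pcMorphism.addComplexity_fixedPoint_of_three_le hn, pcMorphism.radius]
  split_ifs <;> rfl
end

section
/- Let w : ℕ → ℕ be the fixed point starting with 0 of the morphism on the alphabet {0, 1, 3, 4} given by 0→03, 1→43, 3→1, 4→01. Then the additive complexity of w is unbounded: for every constant C there exists n with ρ⁺_w(n) > C. -/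
/-- The morphism 0→03, 1→43, 3→1, 4→01 on the alphabet {0, 1, 3, 4}. -/
def ccssMorphism : ℕ → List ℕ :=
  fun a => if a = 0 then [0, 3] else if a = 1 then [4, 3]
    else if a = 3 then [1] else [0, 1]

namespace CCSSAux


/-- Parikh vector (counts of letters 0,1,3,4) of `f^k(0)` for the CCSS morphism. -/
def Aq : ℕ → ℕ × ℕ × ℕ × ℕ
  | 0 => (1, 0, 0, 0)
  | k + 1 =>
    let q := Aq k
    (q.1 + q.2.2.2, q.2.2.1 + q.2.2.2, q.1 + q.2.1, q.2.1)

lemma Aq_add_one (k : ℕ) :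
    Aq (k + 1) = ((Aq k).1 + (Aq k).2.2.2, (Aq k).2.2.1 + (Aq k).2.2.2,
      (Aq k).1 + (Aq k).2.1, (Aq k).2.1) := rfl

/-- Length of `f^k(0)`. -/
def Nn (k : ℕ) : ℕ := (Aq k).1 + (Aq k).2.1 + (Aq k).2.2.1 + (Aq k).2.2.2

/-- Letter-sum of `f^k(0)`. -/
def Sv (k : ℕ) : ℕ := (Aq k).2.1 + 3 * (Aq k).2.2.1 + 4 * (Aq k).2.2.2

def cseq (k : ℕ) : ℤ := (Nn k : ℤ) * (Sv (k + 1) : ℤ) - (Nn (k + 1) : ℤ) * (Sv k : ℤ)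

def dseq (k : ℕ) : ℤ := (-1) ^ k * cseq k

lemma Nn_succ_le (k : ℕ) : Nn (k + 1) ≤ 2 * Nn k := by
  simp only [Nn, Aq_add_one]; omega

lemma Nn_le_pow (k : ℕ) : Nn k ≤ 2 ^ k := by
  induction k with
  | zero => simp [Nn, Aq]
  | succ k ih =>
    have := Nn_succ_le k
    have : Nn (k+1) ≤ 2 * 2 ^ k := by omega
    simpa [pow_succ, two_mul, Nat.mul_comm] using this

lemma crec (k : ℕ) : cseq (k + 6) =
    cseq k - 2 * cseq (k + 1) - cseq (k + 2) - cseq (k + 3) + cseq (k + 4)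
      - 2 * cseq (k + 5) := by
  have h1 : Aq (k + 1) = _ := Aq_add_one k
  have h2 : Aq (k + 2) = _ := Aq_add_one (k + 1)
  have h3 : Aq (k + 3) = _ := Aq_add_one (k + 2)
  have h4 : Aq (k + 4) = _ := Aq_add_one (k + 3)
  have h5 : Aq (k + 5) = _ := Aq_add_one (k + 4)
  have h6 : Aq (k + 6) = _ := Aq_add_one (k + 5)
  have h7 : Aq (k + 7) = _ := Aq_add_one (k + 6)
  simp only [cseq, Nn, Sv, show k+6+1 = k+7 from rfl, show k+5+1 = k+6 from rfl,
    show k+4+1 = k+5 from rfl, show k+3+1 = k+4 from rfl, show k+2+1 = k+3 from rfl,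
    show k+1+1 = k+2 from rfl, h7, h6, h5, h4, h3, h2, h1]
  push_cast
  ring

lemma drec (k : ℕ) : dseq (k + 6) =
    2 * dseq (k + 5) + dseq (k + 4) + dseq (k + 3) - dseq (k + 2)
      + 2 * dseq (k + 1) + dseq k := by
  simp only [dseq, crec k, show k+6 = k+5+1 from rfl, show k+5 = k+4+1 from rfl,
    show k+4 = k+3+1 from rfl, show k+3 = k+2+1 from rfl, show k+2 = k+1+1 from rfl,
    pow_succ]
  ring

/-- ratio invariant -/
def Hd (j : ℕ) : Prop := 0 < dseq j ∧ 21 * dseq j ≤ 10 * dseq (j + 1) ∧ dseq (j + 1) ≤ 3 * dseq j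

lemma Hd_all : ∀ k, Hd (k + 3) ∧ Hd (k + 4) ∧ Hd (k + 5) ∧ Hd (k + 6) ∧ Hd (k + 7) ∧ Hd (k + 8) := by
  intro k
  induction k with
  | zero =>
    constructor
    · constructor
      · decide
      · constructor <;> decide
    constructor
    · refine ⟨by decide, by decide, by decide⟩
    constructor
    · refine ⟨by decide, by decide, by decide⟩
    constructor
    · refine ⟨by decide, by decide, by decide⟩
    constructor
    · refine ⟨by decide, by decide, by decide⟩
    · refine ⟨by decide, by decide, by decide⟩
  | succ k ih =>
    obtain ⟨-, h4, h5, h6, h7, h8⟩ := ih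
    obtain ⟨p4, r4, u4⟩ := h4
    obtain ⟨p5, r5, u5⟩ := h5
    obtain ⟨p6, r6, u6⟩ := h6
    obtain ⟨p7, r7, u7⟩ := h7
    obtain ⟨p8, r8, u8⟩ := h8
    have e9 := drec (k + 3)
    have e10 := drec (k + 4)
    rw [show k+3+6 = k+9 from by omega, show k+3+5 = k+8 from by omega,
      show k+3+4 = k+7 from by omega, show k+3+3 = k+6 from by omega,
      show k+3+2 = k+5 from by omega, show k+3+1 = k+4 from by omega] at e9
    rw [show k+4+6 = k+10 from by omega, show k+4+5 = k+9 from by omega,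
      show k+4+4 = k+8 from by omega, show k+4+3 = k+7 from by omega,
      show k+4+2 = k+6 from by omega, show k+4+1 = k+5 from by omega] at e10
    have p9 : 0 < dseq (k + 9) := by
      have : dseq (k + 4 + 1) = dseq (k + 5) := by norm_num
      linarith [r8, p8]
    have hH9 : Hd (k + 9) := by
      refine ⟨p9, ?_, ?_⟩
      · rw [show k+9+1 = k+10 from by omega]
        linarith
      · rw [show k+9+1 = k+10 from by omega]
        linarith
    refine ⟨?_, ?_, ?_, ?_, ?_, ?_⟩
    · exact ⟨p4, r4, u4⟩
    · exact ⟨p5, r5, u5⟩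
    · exact ⟨p6, r6, u6⟩
    · exact ⟨p7, r7, u7⟩
    · exact ⟨p8, r8, u8⟩
    · exact hH9

lemma Hd_ge3 (j : ℕ) (hj : 3 ≤ j) : Hd j := by
  obtain ⟨k, rfl⟩ : ∃ k, j = k + 3 := ⟨j - 3, by omega⟩
  exact (Hd_all k).1

lemma dgrow : ∀ m : ℕ, 21 ^ m * dseq 3 ≤ 10 ^ m * dseq (3 + m) := by
  intro m
  induction m with
  | zero => simp
  | succ m ih =>
    have h := (Hd_ge3 (3 + m) (by omega)).2.1
    have h21 : (0:ℤ) < 21 := by norm_num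
    calc 21 ^ (m+1) * dseq 3 = 21 * (21 ^ m * dseq 3) := by ring
      _ ≤ 21 * (10 ^ m * dseq (3 + m)) := by
          have := ih; nlinarith [ih]
      _ = 10 ^ m * (21 * dseq (3 + m)) := by ring
      _ ≤ 10 ^ m * (10 * dseq (3 + m + 1)) := by
          have hp : (0:ℤ) ≤ 10 ^ m := by positivity
          exact mul_le_mul_of_nonneg_left h hp
      _ = 10 ^ (m+1) * dseq (3 + (m+1)) := by
          rw [show 3 + (m+1) = 3 + m + 1 from by omega]; ring

lemma binom (m : ℕ) : (20:ℤ) ^ m * (20 + m) ≤ 20 * 21 ^ m := by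
  induction m with
  | zero => norm_num
  | succ m ih =>
    have hle : (20:ℤ) ^ m ≤ 21 ^ m := by
      apply pow_le_pow_left₀ (by norm_num) (by norm_num)
    have h1 : (20:ℤ) ^ (m+1) * (20 + (m+1)) = 20 * ((20:ℤ)^m * (20 + m)) + 20 * (20:ℤ)^m := by
      push_cast; ring
    have h2 : 20 * (20:ℤ)^m ≤ 20 * 21 ^ m := by linarith
    calc (20:ℤ) ^ (m+1) * (20 + (m+1)) = 20 * ((20:ℤ)^m * (20 + m)) + 20 * (20:ℤ)^m := h1
      _ ≤ 20 * (20 * 21 ^ m) + 20 * 21 ^ m := by linarith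
      _ = 20 * 21 ^ (m+1) := by ring

lemma dseq3 : dseq 3 = 23 := by decide

lemma dseq_le_abs (k : ℕ) : dseq k ≤ |cseq k| := by
  have : |dseq k| = |cseq k| := by
    simp [dseq, abs_mul, abs_pow]
  rw [← this]; exact le_abs_self _



/-- number of occurrences of letter `a` among the first `m` letters -/
def cnt (x : ℕ → ℕ) (a m : ℕ) : ℕ := ∑ i ∈ Finset.range m, if x i = a then 1 else 0

/-- length of the image under the morphism of the length-`p` prefix -/
def Lw (x : ℕ → ℕ) (p : ℕ) : ℕ := ∑ k ∈ Finset.range p, (ccssMorphism (x k)).length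

lemma Lw_eq (x : ℕ → ℕ) (p : ℕ) :
    (∑ k ∈ Finset.range p, (ccssMorphism (x k)).length) = Lw x p := rfl

lemma Lw_succ (x : ℕ → ℕ) (p : ℕ) :
    Lw x (p + 1) = Lw x p + (ccssMorphism (x p)).length := Finset.sum_range_succ _ _

lemma ccss_len_pos (a : ℕ) : 1 ≤ (ccssMorphism a).length := by
  unfold ccssMorphism; split_ifs <;> simp

lemma cnt_succ (x : ℕ → ℕ) (a p : ℕ) :
    cnt x a (p + 1) = cnt x a p + if x p = a then 1 else 0 := Finset.sum_range_succ _ _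

lemma sum_range_add' (g : ℕ → ℕ) (a : ℕ) : ∀ b : ℕ,
    ∑ i ∈ Finset.range (a + b), g i
      = (∑ i ∈ Finset.range a, g i) + ∑ j ∈ Finset.range b, g (a + j) := by
  intro b
  induction b with
  | zero => simp
  | succ b ih =>
    rw [show a + (b+1) = (a+b)+1 from rfl, Finset.sum_range_succ, ih,
      Finset.sum_range_succ]
    omega

lemma cnt_add (x : ℕ → ℕ) (a A B : ℕ) :
    cnt x a (A + B) = cnt x a A + ∑ j ∈ Finset.range B, (if x (A + j) = a then 1 else 0) :=
  sum_range_add' _ _ _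

section Word

variable (w : ℕ → ℕ) (hw : IsFixedPointOf ccssMorphism 0 w)

include hw

lemma exists_block (i : ℕ) : ∃ n, Lw w n ≤ i ∧ i < Lw w (n + 1) := by
  induction i with
  | zero =>
    refine ⟨0, by simp [Lw], ?_⟩
    rw [Lw_succ]
    have := ccss_len_pos (w 0)
    simp [Lw]
    omega
  | succ i ih =>
    obtain ⟨n, h1, h2⟩ := ih
    by_cases hlt : i + 1 < Lw w (n + 1)
    · exact ⟨n, by omega, hlt⟩
    · refine ⟨n + 1, by omega, ?_⟩
      rw [Lw_succ]
      have := ccss_len_pos (w (n+1))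
      omega

lemma walph (i : ℕ) : w i = 0 ∨ w i = 1 ∨ w i = 3 ∨ w i = 4 := by
  obtain ⟨n, h1, h2⟩ := exists_block w hw i
  rw [Lw_succ] at h2
  have hj : i - Lw w n < (ccssMorphism (w n)).length := by omega
  have hgd := hw.2 n (i - Lw w n) hj
  rw [Lw_eq] at hgd
  rw [show Lw w n + (i - Lw w n) = i from by omega] at hgd
  set j := i - Lw w n with hjd
  revert hj hgd
  unfold ccssMorphism
  split_ifs <;>
  · intro hj hgd
    simp at hj
    first
    | (have hj01 : j = 0 ∨ j = 1 := by omega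
       rcases hj01 with h|h <;> rw [h] at hgd <;> simp at hgd <;> omega)
    | (have hj0 : j = 0 := by omega
       rw [hj0] at hgd; simp at hgd; omega)

lemma wle4 (i : ℕ) : w i ≤ 4 := by rcases walph w hw i with h|h|h|h <;> omega

/-- the four letter-count transfer identities plus the length identity -/
lemma transfer : ∀ p,
    cnt w 0 (Lw w p) = cnt w 0 p + cnt w 4 p ∧
    cnt w 1 (Lw w p) = cnt w 3 p + cnt w 4 p ∧
    cnt w 3 (Lw w p) = cnt w 0 p + cnt w 1 p ∧
    cnt w 4 (Lw w p) = cnt w 1 p ∧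
    Lw w p + cnt w 3 p = 2 * p := by
  intro p
  induction p with
  | zero => simp [cnt, Lw]
  | succ p ih =>
    obtain ⟨i0, i1, i3, i4, iL⟩ := ih
    have hLs := Lw_succ w p
    rcases walph w hw p with hp|hp|hp|hp
    · have hfl : ccssMorphism (w p) = [0, 3] := by rw [hp]; rfl
      have hl0 : w (Lw w p) = 0 := by
        have h := hw.2 p 0 (by rw [hfl]; simp)
        rw [Lw_eq, hfl] at h; simpa using h
      have hl1 : w (Lw w p + 1) = 3 := by
        have h := hw.2 p 1 (by rw [hfl]; simp)
        rw [Lw_eq, hfl] at h; simpa using h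
      have hB : Lw w (p + 1) = Lw w p + 2 := by rw [hLs, hfl]; rfl
      refine ⟨?_, ?_, ?_, ?_, ?_⟩ <;>
      · simp only [hB, cnt_add, Finset.sum_range_succ, Finset.sum_range_zero, cnt_succ, hp]
        simp [hl0, hl1]
        omega
    · have hfl : ccssMorphism (w p) = [4, 3] := by rw [hp]; rfl
      have hl0 : w (Lw w p) = 4 := by
        have h := hw.2 p 0 (by rw [hfl]; simp)
        rw [Lw_eq, hfl] at h; simpa using h
      have hl1 : w (Lw w p + 1) = 3 := by
        have h := hw.2 p 1 (by rw [hfl]; simp)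
        rw [Lw_eq, hfl] at h; simpa using h
      have hB : Lw w (p + 1) = Lw w p + 2 := by rw [hLs, hfl]; rfl
      refine ⟨?_, ?_, ?_, ?_, ?_⟩ <;>
      · simp only [hB, cnt_add, Finset.sum_range_succ, Finset.sum_range_zero, cnt_succ, hp]
        simp [hl0, hl1]
        omega
    · have hfl : ccssMorphism (w p) = [1] := by rw [hp]; rfl
      have hl0 : w (Lw w p) = 1 := by
        have h := hw.2 p 0 (by rw [hfl]; simp)
        rw [Lw_eq, hfl] at h; simpa using h
      have hB : Lw w (p + 1) = Lw w p + 1 := by rw [hLs, hfl]; rfl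
      refine ⟨?_, ?_, ?_, ?_, ?_⟩ <;>
      · simp only [hB, cnt_add, Finset.sum_range_succ, Finset.sum_range_zero, cnt_succ, hp]
        simp [hl0]
        omega
    · have hfl : ccssMorphism (w p) = [0, 1] := by rw [hp]; rfl
      have hl0 : w (Lw w p) = 0 := by
        have h := hw.2 p 0 (by rw [hfl]; simp)
        rw [Lw_eq, hfl] at h; simpa using h
      have hl1 : w (Lw w p + 1) = 1 := by
        have h := hw.2 p 1 (by rw [hfl]; simp)
        rw [Lw_eq, hfl] at h; simpa using h
      have hB : Lw w (p + 1) = Lw w p + 2 := by rw [hLs, hfl]; rfl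
      refine ⟨?_, ?_, ?_, ?_, ?_⟩ <;>
      · simp only [hB, cnt_add, Finset.sum_range_succ, Finset.sum_range_zero, cnt_succ, hp]
        simp [hl0, hl1]
        omega

/-- sum and total-count of prefixes in terms of letter counts -/
lemma prefix_sum_cnt : ∀ p,
    blockSum w 0 p = cnt w 1 p + 3 * cnt w 3 p + 4 * cnt w 4 p ∧
    p = cnt w 0 p + cnt w 1 p + cnt w 3 p + cnt w 4 p := by
  intro p
  induction p with
  | zero => simp [blockSum, cnt]
  | succ p ih =>
    obtain ⟨ihs, ihc⟩ := ih
    have hbs : blockSum w 0 (p + 1) = blockSum w 0 p + w p := by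
      simp [blockSum, Finset.sum_range_succ]
    rcases walph w hw p with hp|hp|hp|hp <;>
    · constructor <;>
      · simp only [hbs, cnt_succ, hp]
        simp
        omega

/-- Parikh vector of prefix of length `Nn k` is `Aq k`. -/
lemma bridge : ∀ k,
    cnt w 0 (Nn k) = (Aq k).1 ∧ cnt w 1 (Nn k) = (Aq k).2.1 ∧
    cnt w 3 (Nn k) = (Aq k).2.2.1 ∧ cnt w 4 (Nn k) = (Aq k).2.2.2 := by
  intro k
  induction k with
  | zero =>
    have h1 : Nn 0 = 1 := by simp [Nn, Aq]
    have hw0 := hw.1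
    rw [h1]
    refine ⟨?_, ?_, ?_, ?_⟩ <;>
      simp [cnt, Finset.sum_range_one, Finset.filter_singleton, hw0, Aq]
  | succ k ih =>
    obtain ⟨i0, i1, i3, i4⟩ := ih
    obtain ⟨t0, t1, t3, t4, tL⟩ := transfer w hw (Nn k)
    have hNk : Nn k = cnt w 0 (Nn k) + cnt w 1 (Nn k) + cnt w 3 (Nn k) + cnt w 4 (Nn k) :=
      (prefix_sum_cnt w hw (Nn k)).2
    have hNsucc : Nn (k + 1) + (Aq k).2.2.1 = 2 * Nn k := by
      simp only [Nn, Aq_add_one]; omega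
    have hL : Lw w (Nn k) = Nn (k + 1) := by omega
    rw [← hL]
    refine ⟨?_, ?_, ?_, ?_⟩ <;> simp only [Aq_add_one] <;> omega

lemma prefix_sum_eq (k : ℕ) : blockSum w 0 (Nn k) = Sv k := by
  obtain ⟨i0, i1, i3, i4⟩ := bridge w hw k
  have := (prefix_sum_cnt w hw (Nn k)).1
  simp only [Sv]
  omega

lemma blockSum_split (a b : ℕ) :
    blockSum w 0 (a + b) = blockSum w 0 a + blockSum w a b := by
  simp only [blockSum, Nat.zero_add]
  exact sum_range_add' (fun i => w i) a b

omit hw in lemma blockSum_succ (i n : ℕ) :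
    blockSum w i (n + 1) = blockSum w i n + w (i + n) := Finset.sum_range_succ _ _

lemma blockSum_le (i n : ℕ) : blockSum w i n ≤ 4 * n := by
  calc blockSum w i n ≤ ∑ _j ∈ Finset.range n, 4 :=
        Finset.sum_le_sum fun j _ => wle4 w hw (i + j)
    _ = 4 * n := by simp [Finset.sum_const, Nat.mul_comm]

omit hw in lemma blockSum_step (i n : ℕ) :
    blockSum w (i + 1) n + w i = blockSum w i n + w (i + n) := by
  have h1 : blockSum w i (n + 1) = blockSum w i n + w (i + n) := blockSum_succ w i n
  have h2 : blockSum w i (n + 1) = w i + blockSum w (i + 1) n := by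
    simp only [blockSum]
    rw [Finset.sum_range_succ']
    rw [Finset.sum_congr rfl fun j _ => by rw [show i + (j + 1) = i + 1 + j from by omega]]
    simp only [Nat.add_zero]
    omega
  omega

end Word

/-- discrete intermediate value, upward -/
lemma ivt_up (g : ℕ → ℕ) (hstep : ∀ t, g (t + 1) ≤ g t + 4 ∧ g t ≤ g (t + 1) + 4) :
    ∀ j i a, i ≤ j → g i ≤ a → a ≤ g j → ∃ k, a ≤ g k ∧ g k ≤ a + 3 := by
  intro j
  induction j with
  | zero =>
    intro i a hij h1 h2
    have h0 : i = 0 := by omega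
    subst h0
    exact ⟨0, by omega, by omega⟩
  | succ j ih =>
    intro i a hij h1 h2
    by_cases hc : g (j + 1) ≤ a + 3
    · exact ⟨j + 1, h2, hc⟩
    · have hs := (hstep j).1
      by_cases hij' : i ≤ j
      · exact ih i a hij' h1 (by omega)
      · have he : i = j + 1 := by omega
        subst he
        omega
/-- discrete intermediate value, downward -/
lemma ivt_down (g : ℕ → ℕ) (hstep : ∀ t, g (t + 1) ≤ g t + 4 ∧ g t ≤ g (t + 1) + 4) :
    ∀ i j a, j ≤ i → a ≤ g j → g i ≤ a → ∃ k, a ≤ g k ∧ g k ≤ a + 3 := by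
  intro i
  induction i with
  | zero =>
    intro j a hij h1 h2
    have h0 : j = 0 := by omega
    subst h0
    exact ⟨0, by omega, by omega⟩
  | succ i ih =>
    intro j a hij h1 h2
    by_cases hc : a ≤ g (i + 1)
    · exact ⟨i + 1, hc, by omega⟩
    · have hs := (hstep i).2
      by_cases hji : j ≤ i
      · by_cases hgi : g i ≤ a
        · exact ih j a hji h1 hgi
        · exact ⟨i, by omega, by omega⟩
      · have he : j = i + 1 := by omega
        subst he
        omega

end CCSSAux


/-- The additive complexity of the fixed point of 0→03, 1→43, 3→1, 4→01 is
unbounded. -/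
theorem ccss_additive_complexity_unbounded (w : ℕ → ℕ)
    (hw : IsFixedPointOf ccssMorphism 0 w) :
    ∀ C : ℕ, ∃ n : ℕ, C < addComplexity w n := by
  intro C
  by_contra hcon
  push_neg at hcon
  -- Step 1: all window sums of a given length lie within `4*C` of each other.
  have hspread : ∀ n i j, blockSum w i n ≤ blockSum w j n + 4 * C := by
    intro n i j
    by_contra hbig
    push_neg at hbig
    have hstep : ∀ t, blockSum w (t + 1) n ≤ blockSum w t n + 4 ∧
        blockSum w t n ≤ blockSum w (t + 1) n + 4 := by
      intro t
      have h1 := CCSSAux.blockSum_step w t n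
      have h2 := CCSSAux.wle4 w hw t
      have h3 := CCSSAux.wle4 w hw (t + n)
      omega
    have hex : ∀ m : Fin (C + 1), ∃ s, (∃ i', blockSum w i' n = s) ∧
        blockSum w j n + 4 * (m : ℕ) ≤ s ∧ s ≤ blockSum w j n + 4 * (m : ℕ) + 3 := by
      intro m
      have hm : (m : ℕ) ≤ C := Nat.lt_succ_iff.mp m.2
      have hle : blockSum w j n + 4 * (m : ℕ) ≤ blockSum w i n := by omega
      rcases le_total j i with hj | hj
      · obtain ⟨k, hk1, hk2⟩ := CCSSAux.ivt_up (fun t => blockSum w t n) hstep i j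
          (blockSum w j n + 4 * (m : ℕ)) hj
          (show blockSum w j n ≤ _ by omega) hle
        exact ⟨blockSum w k n, ⟨k, rfl⟩, hk1, hk2⟩
      · obtain ⟨k, hk1, hk2⟩ := CCSSAux.ivt_down (fun t => blockSum w t n) hstep j i
          (blockSum w j n + 4 * (m : ℕ)) hj hle
          (show blockSum w j n ≤ _ by omega)
        exact ⟨blockSum w k n, ⟨k, rfl⟩, hk1, hk2⟩
    choose v hv1 hv2 hv3 using hex
    have hinj : Function.Injective v := by
      intro m m' he
      have a2 := hv2 m
      have a3 := hv3 m
      have b2 := hv2 m'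
      have b3 := hv3 m'
      rw [he] at a2 a3
      have : (m : ℕ) = (m' : ℕ) := by omega
      exact Fin.ext this
    have hVfin : {s : ℕ | ∃ i', blockSum w i' n = s}.Finite := by
      apply (Set.finite_Iic (4 * n)).subset
      rintro s ⟨i', rfl⟩
      exact CCSSAux.blockSum_le w hw i' n
    have hsub : ↑(Finset.image v Finset.univ) ⊆ {s : ℕ | ∃ i', blockSum w i' n = s} := by
      intro s hs
      simp only [Finset.coe_image, Set.mem_image] at hs
      obtain ⟨m, -, rfl⟩ := hs
      exact hv1 m
    have hcard : (Finset.image v Finset.univ).card = C + 1 := by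
      rw [Finset.card_image_of_injective _ hinj, Finset.card_univ, Fintype.card_fin]
    have hle2 := Set.ncard_le_ncard hsub hVfin
    rw [Set.ncard_coe_finset, hcard] at hle2
    have hcc := hcon n
    unfold addComplexity at hcc
    omega
  -- Step 2: the prefix-sum function is a `4*C`-quasimorphism.
  set T : ℕ → ℤ := fun m => (blockSum w 0 m : ℤ) with hT
  have habs : ∀ a b : ℕ, |T (a + b) - T a - T b| ≤ 4 * (C : ℤ) := by
    intro a b
    have hsplit := CCSSAux.blockSum_split w hw a b
    have h1 := hspread b a 0
    have h2 := hspread b 0 a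
    rw [abs_le]
    constructor <;> simp only [hT] <;> omega
  have hmul : ∀ (m a : ℕ), |T (m * a) - (m : ℤ) * T a| ≤ (m : ℤ) * (4 * (C : ℤ)) := by
    intro m a
    induction m with
    | zero => simp [hT, blockSum]
    | succ m ih =>
      have hq := habs (m * a) a
      have he : (m + 1) * a = m * a + a := by ring
      rw [he]
      rw [abs_le] at *
      constructor <;> push_cast <;> [linarith [ih.1, hq.1]; linarith [ih.2, hq.2]]
  have hcross : ∀ a b : ℕ, |(a : ℤ) * T b - (b : ℤ) * T a| ≤ ((a : ℤ) + b) * (4 * (C : ℤ)) := by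
    intro a b
    have h1 := hmul a b
    have h2 := hmul b a
    rw [show b * a = a * b from Nat.mul_comm b a] at h2
    rw [abs_le] at *
    constructor <;> [nlinarith [h1.1, h1.2, h2.1, h2.2]; nlinarith [h1.1, h1.2, h2.1, h2.2]]
  have hTN : ∀ k, T (CCSSAux.Nn k) = (CCSSAux.Sv k : ℤ) := by
    intro k
    simp only [hT]
    exact_mod_cast CCSSAux.prefix_sum_eq w hw k
  -- Step 3: exact values on renormalized prefixes give a contradiction.
  have hdk : ∀ k, CCSSAux.dseq k ≤
      ((CCSSAux.Nn k : ℤ) + (CCSSAux.Nn (k + 1) : ℤ)) * (4 * (C : ℤ)) := by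
    intro k
    have h := hcross (CCSSAux.Nn k) (CCSSAux.Nn (k + 1))
    rw [hTN (k + 1), hTN k] at h
    have hceq : CCSSAux.cseq k = (CCSSAux.Nn k : ℤ) * (CCSSAux.Sv (k + 1) : ℤ)
        - (CCSSAux.Nn (k + 1) : ℤ) * (CCSSAux.Sv k : ℤ) := rfl
    refine le_trans (CCSSAux.dseq_le_abs k) ?_
    rw [hceq]
    exact h
  set m := 84 * C with hm
  have hg := CCSSAux.dgrow m
  rw [CCSSAux.dseq3] at hg
  have hb := hdk (3 + m)
  have hN1 : (CCSSAux.Nn (3 + m) : ℤ) ≤ 2 ^ (3 + m) := by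
    have := CCSSAux.Nn_le_pow (3 + m)
    exact_mod_cast this
  have hN2 : (CCSSAux.Nn (3 + m + 1) : ℤ) ≤ 2 ^ (4 + m) := by
    have := CCSSAux.Nn_le_pow (3 + m + 1)
    rw [show 4 + m = 3 + m + 1 from by omega]
    exact_mod_cast this
  have hsum : (CCSSAux.Nn (3 + m) : ℤ) + (CCSSAux.Nn (3 + m + 1) : ℤ) ≤ 24 * 2 ^ m := by
    have he : (2 : ℤ) ^ (3 + m) + 2 ^ (4 + m) = 24 * 2 ^ m := by
      rw [pow_add, pow_add]; ring
    linarith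
  have hd3m : CCSSAux.dseq (3 + m) ≤ 24 * 2 ^ m * (4 * (C : ℤ)) := by
    refine le_trans hb ?_
    have hc4 : (0 : ℤ) ≤ 4 * (C : ℤ) := by positivity
    exact mul_le_mul_of_nonneg_right hsum hc4
  have hchain : (21 : ℤ) ^ m * 23 ≤ 96 * (C : ℤ) * 20 ^ m := by
    calc (21 : ℤ) ^ m * 23 ≤ 10 ^ m * CCSSAux.dseq (3 + m) := hg
      _ ≤ 10 ^ m * (24 * 2 ^ m * (4 * (C : ℤ))) := by
          exact mul_le_mul_of_nonneg_left hd3m (by positivity)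
      _ = 96 * (C : ℤ) * (10 ^ m * 2 ^ m) := by ring
      _ = 96 * (C : ℤ) * 20 ^ m := by rw [← mul_pow]; norm_num
  have hbin := CCSSAux.binom m
  have e1 : (23 : ℤ) * (20 ^ m * (20 + (m : ℤ))) ≤ 23 * (20 * 21 ^ m) :=
    mul_le_mul_of_nonneg_left hbin (by norm_num)
  have e2 : (20 : ℤ) * (21 ^ m * 23) ≤ 20 * (96 * (C : ℤ) * 20 ^ m) :=
    mul_le_mul_of_nonneg_left hchain (by norm_num)
  have hfin : (23 : ℤ) * (20 + (m : ℤ)) * 20 ^ m ≤ 1920 * (C : ℤ) * 20 ^ m := by nlinarith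
  have hpos : (0 : ℤ) < 20 ^ m := by positivity
  have hcan : (23 : ℤ) * (20 + (m : ℤ)) ≤ 1920 * (C : ℤ) :=
    le_of_mul_le_mul_right hfin hpos
  rw [hm] at hcan
  push_cast at hcan
  have hC0 : (0 : ℤ) ≤ (C : ℤ) := by positivity
  linarith
end

section
/- Let a₁ < a₂ < ⋯ < a_k be natural numbers and let x : ℕ → ℕ be an infinite word with values in {a₁, …, a_k} that is C-balanced for some C ≥ 1. Then the additive complexity of x satisfies ρ⁺_x(n) ≤ C · ∑_{i=1}^{⌈k/2⌉} (a_{k+1−i} − a_i) + 1 for all n ≥ 0. -/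
/-! By balance, the Parikh vectors `p, p'` of two factors of length `n` satisfy
`|p b - p' b| ≤ C` and `∑ b, (p b - p' b) = 0`, so for any centre `c` the difference of the two
letter-sums is `∑ b, (p b - p' b) (b - c)`, at most `C ∑ b, |b - c|` in absolute value. Taking `c`
to be the median letter `a_⌈k/2⌉` makes `∑ b, |b - c|` at most `∑_{i ≤ ⌈k/2⌉} (a_{k+1-i} - a_i)`.
All sums of length-`n` factors thus lie in an interval of that length. -/

open Finset

lemma ncard_le_add_one_of_forall_le_add {S : Set ℕ} {B : ℕ}
    (h : ∀ s ∈ S, ∀ t ∈ S, s ≤ t + B) : S.ncard ≤ B + 1 := by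
  have hsub : S ⊆ Set.Icc (sInf S) (sInf S + B) := fun s hs =>
    ⟨Nat.sInf_le hs, h s hs _ (Nat.sInf_mem ⟨s, hs⟩)⟩
  calc S.ncard ≤ (Set.Icc (sInf S) (sInf S + B)).ncard :=
        Set.ncard_le_ncard hsub (Set.finite_Icc _ _)
    _ = B + 1 := by rw [Set.ncard_Icc_nat]; omega

lemma sum_parikh_smul {M : Type*} [AddCommMonoid M] {x : ℕ → ℕ} {A : Finset ℕ}
    (hx : ∀ j, x j ∈ A) (f : ℕ → M) (i n : ℕ) :
    ∑ b ∈ A, parikh x i n b • f b = ∑ j ∈ range n, f (x (i + j)) := by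
  simp only [parikh, ← sum_const]
  exact sum_fiberwise_of_maps_to' (fun j _ => hx (i + j)) f

lemma blockSum_sub_blockSum_eq_sum {x : ℕ → ℕ} {A : Finset ℕ} (hx : ∀ j, x j ∈ A)
    (i i' n : ℕ) (c : ℤ) :
    (blockSum x i n : ℤ) - blockSum x i' n =
      ∑ b ∈ A, ((parikh x i n b : ℤ) - parikh x i' n b) * (b - c) := by
  have hcentred : ∀ i, ∑ b ∈ A, (parikh x i n b : ℤ) * (b - c) = blockSum x i n - n * c := by
    intro i
    simp only [← nsmul_eq_mul, sum_parikh_smul hx (fun b => (b : ℤ) - c), sum_sub_distrib,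
      blockSum, sum_const, card_range, Nat.cast_sum]
  simp only [sub_mul, sum_sub_distrib, hcentred]
  ring

lemma CBalanced.abs_blockSum_sub_le {x : ℕ → ℕ} {C : ℕ} (hbal : CBalanced x C)
    {A : Finset ℕ} (hx : ∀ j, x j ∈ A) (i i' n : ℕ) (c : ℤ) :
    |(blockSum x i n : ℤ) - blockSum x i' n| ≤ C * ∑ b ∈ A, |(b : ℤ) - c| := by
  rw [blockSum_sub_blockSum_eq_sum hx i i' n c, mul_sum]
  refine (abs_sum_le_sum_abs _ _).trans (sum_le_sum fun b _ => ?_)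
  rw [abs_mul]
  gcongr
  rw [Int.abs_eq_natAbs]
  exact_mod_cast hbal b i i' n

lemma sum_abs_sub_median_le {α : Type*} [AddCommGroup α] [LinearOrder α]
    [IsOrderedAddMonoid α] {a : ℕ → α} {k : ℕ} (ha : MonotoneOn a (Set.Icc 1 k)) :
    ∑ t ∈ Icc 1 k, |a t - a ((k + 1) / 2)| ≤
      ∑ t ∈ Icc 1 ((k + 1) / 2), (a (k + 1 - t) - a t) := by
  set m := (k + 1) / 2
  have hsplit : Icc 1 k = Icc 1 m ∪ Ioc m k := by
    ext t
    simp only [mem_Icc, mem_union, mem_Ioc]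
    omega
  have hdisj : Disjoint (Icc 1 m) (Ioc m k) :=
    disjoint_left.2 fun t h₁ h₂ => by simp only [mem_Icc, mem_Ioc] at h₁ h₂; omega
  have hlow : ∑ t ∈ Icc 1 m, |a t - a m| = ∑ t ∈ Icc 1 m, (a m - a t) :=
    sum_congr rfl fun t ht => by
      simp only [mem_Icc] at ht
      rw [abs_sub_comm, abs_of_nonneg (sub_nonneg.2 (ha ⟨ht.1, by omega⟩ ⟨by omega, by omega⟩ ht.2))]
  -- reflecting `t ↦ k + 1 - t` pairs each letter above the median with one below it
  have hupp : ∑ t ∈ Ioc m k, |a t - a m| ≤ ∑ t ∈ Icc 1 m, (a (k + 1 - t) - a m) :=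
    calc ∑ t ∈ Ioc m k, |a t - a m|
        = ∑ t ∈ Icc 1 (k - m), (a (k + 1 - t) - a m) := by
          refine sum_nbij' (k + 1 - ·) (k + 1 - ·) ?_ ?_ ?_ ?_ ?_ <;> intro t ht <;>
            simp only [mem_Icc, mem_Ioc] at ht ⊢
          · omega
          · omega
          · omega
          · omega
          · rw [Nat.sub_sub_self (by omega),
              abs_of_nonneg (sub_nonneg.2 (ha ⟨by omega, by omega⟩ ⟨by omega, ht.2⟩ ht.1.le))]
      _ ≤ ∑ t ∈ Icc 1 m, (a (k + 1 - t) - a m) := by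
          refine sum_le_sum_of_subset_of_nonneg (Icc_subset_Icc_right (by omega)) fun t ht _ => ?_
          simp only [mem_Icc] at ht
          exact sub_nonneg.2 (ha ⟨by omega, by omega⟩ ⟨by omega, by omega⟩ (by omega))
  rw [hsplit, sum_union hdisj, hlow]
  calc _ ≤ ∑ t ∈ Icc 1 m, (a m - a t) + ∑ t ∈ Icc 1 m, (a (k + 1 - t) - a m) := by gcongr
    _ = _ := by rw [← sum_add_distrib]; exact sum_congr rfl fun t _ => by abel

theorem balanced_additive_complexity_bound_general (k C : ℕ)
    (a : ℕ → ℕ) (hmono : ∀ i j, 1 ≤ i → i < j → j ≤ k → a i < a j)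
    (x : ℕ → ℕ) (hvals : ∀ n : ℕ, ∃ i, 1 ≤ i ∧ i ≤ k ∧ x n = a i)
    (hbal : CBalanced x C) :
    ∀ n : ℕ, addComplexity x n ≤
      C * (∑ i ∈ Finset.Icc 1 ((k + 1) / 2), (a (k + 1 - i) - a i)) + 1 := by
  intro n
  have ha : StrictMonoOn a (Set.Icc 1 k) := fun i hi j hj hij => hmono i j hi.1 hij hj.2
  have hx : ∀ j, x j ∈ (Icc 1 k).image a := fun j => by
    obtain ⟨t, h₁, h₂, hj⟩ := hvals j
    exact mem_image.2 ⟨t, mem_Icc.2 ⟨h₁, h₂⟩, hj.symm⟩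
  have hspread : (C : ℤ) * ∑ b ∈ (Icc 1 k).image a, |(b : ℤ) - a ((k + 1) / 2)| ≤
      ↑(C * ∑ i ∈ Icc 1 ((k + 1) / 2), (a (k + 1 - i) - a i)) := by
    rw [sum_image (ha.injOn.mono (by simp)), Nat.cast_mul, Nat.cast_sum]
    refine mul_le_mul_of_nonneg_left ?_ (Nat.cast_nonneg C)
    refine (sum_abs_sub_median_le (a := fun t => (a t : ℤ)) ?_).trans_eq
      (sum_congr rfl fun t ht => ?_)
    · exact fun s hs t ht hst => Nat.cast_le.2 (ha.monotoneOn hs ht hst)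
    · simp only [mem_Icc] at ht
      rw [Nat.cast_sub (ha.monotoneOn ⟨ht.1, by omega⟩ ⟨by omega, by omega⟩ (by omega))]
  apply ncard_le_add_one_of_forall_le_add
  rintro _ ⟨i, rfl⟩ _ ⟨i', rfl⟩
  have hle := (abs_sub_le_iff.1 ((hbal.abs_blockSum_sub_le hx i i' n _).trans hspread)).1
  omega

/-- A C-balanced word over a₁ < ⋯ < a_k has additive complexity bounded by
C·∑_{i=1}^{⌈k/2⌉} (a_{k+1−i} − a_i) + 1. -/
theorem balanced_additive_complexity_bound (k C : ℕ) (hC : 1 ≤ C)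
    (a : ℕ → ℕ) (hmono : ∀ i j, 1 ≤ i → i < j → j ≤ k → a i < a j)
    (x : ℕ → ℕ) (hvals : ∀ n : ℕ, ∃ i, 1 ≤ i ∧ i ≤ k ∧ x n = a i)
    (hbal : CBalanced x C) :
    ∀ n : ℕ, addComplexity x n ≤
      C * (∑ i ∈ Finset.Icc 1 ((k + 1) / 2), (a (k + 1 - i) - a i)) + 1 :=
  balanced_additive_complexity_bound_general k C a hmono x hvals hbal
end
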